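/- arXiv:1504.03138 — 9 statements merged into one kernel-verified Lean document; each statement's English description precedes it below -/
import Mathlib

section
/- For every real number z > 0, the supremum over λ > 0 of (λ·z − exp(λ²) + 1) is at least √(log(z+1)) · z^{3/2} / (4·√z + 8). -/
/-!
Take `l = min √(log (z + 1) / 2) (z / (2 (√z + 1)))`. Then `exp (l²) ≤ √(z + 1) ≤ √z + 1`, so
`exp (l²) - 1 ≤ l² exp (l²) ≤ l² (√z + 1) ≤ l z / 2` and the objective at `l` is at least
`l z / 2`. Both candidates for `l` are at least `√(log (z + 1)) √z / (2 (√z + 2))`, and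
`z^(3/2) = z √z`.
-/

open Real

lemma Real.exp_sub_one_le_mul_exp (x : ℝ) : exp x - 1 ≤ x * exp x := by
  have h : (1 - x) * exp x ≤ exp (-x) * exp x :=
    mul_le_mul_of_nonneg_right (one_sub_le_exp_neg x) (exp_pos x).le
  rw [← exp_add, neg_add_cancel, exp_zero] at h
  linarith

lemma Real.exp_half_log {x : ℝ} (hx : 0 < x) : exp (log x / 2) = √x := by
  rw [sqrt_eq_rpow, rpow_def_of_pos hx]
  ring_nf

lemma Real.sqrt_add_one_le {x : ℝ} (hx : 0 ≤ x) : √(x + 1) ≤ √x + 1 := by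
  rw [sqrt_le_left (by positivity)]
  nlinarith [sq_sqrt hx, sqrt_nonneg x]

lemma Real.rpow_three_halves {x : ℝ} (hx : 0 ≤ x) : x ^ ((3 : ℝ) / 2) = x * √x := by
  rw [show (3 : ℝ) / 2 = 1 + 1 / 2 by norm_num, rpow_add' hx (by norm_num), rpow_one,
    sqrt_eq_rpow]

lemma half_mul_le_mul_sub_exp_sq {z l c : ℝ} (hl : 0 ≤ l) (hc : exp (l ^ 2) ≤ c)
    (hlc : l * c ≤ z / 2) : l * z / 2 ≤ l * z - exp (l ^ 2) + 1 := by
  have hconv := exp_sub_one_le_mul_exp (l ^ 2)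
  have : l ^ 2 * exp (l ^ 2) ≤ l ^ 2 * c := mul_le_mul_of_nonneg_left hc (sq_nonneg l)
  nlinarith [mul_le_mul_of_nonneg_left hlc hl]

lemma bddAbove_mul_sub_exp_sq (z : ℝ) :
    BddAbove {y : ℝ | ∃ l : ℝ, 0 < l ∧ y = l * z - exp (l ^ 2) + 1} := by
  refine ⟨z ^ 2 / 4, ?_⟩
  rintro y ⟨l, -, rfl⟩
  nlinarith [add_one_le_exp (l ^ 2), sq_nonneg (l - z / 2)]

lemma exp_sq_le_sqrt_add_one {z l : ℝ} (hz : 0 ≤ z) (hl : l ^ 2 ≤ log (z + 1) / 2) :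
    exp (l ^ 2) ≤ √z + 1 := calc
  exp (l ^ 2) ≤ exp (log (z + 1) / 2) := exp_le_exp.mpr hl
  _ = √(z + 1) := exp_half_log (by linarith)
  _ ≤ √z + 1 := sqrt_add_one_le hz

lemma sqrt_mul_div_le_sqrt_half {L s : ℝ} (hL : 0 ≤ L) (hs : 0 ≤ s) :
    √L * s / (2 * (s + 2)) ≤ √(L / 2) := calc
  √L * s / (2 * (s + 2)) ≤ √L / 2 := by
    rw [div_le_div_iff₀ (by positivity) two_pos]
    nlinarith [sqrt_nonneg L]
  _ ≤ √(L / 2) := by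
    rw [le_sqrt (by positivity) (by positivity), div_pow, sq_sqrt hL]
    linarith

lemma sqrt_log_mul_sqrt_div_le {z : ℝ} (hz : 0 ≤ z) :
    √(log (z + 1)) * √z / (2 * (√z + 2)) ≤ z / (2 * (√z + 1)) := calc
  √(log (z + 1)) * √z / (2 * (√z + 2)) ≤ √z * √z / (2 * (√z + 1)) := by
    have hlog : log (z + 1) ≤ z := by linarith [log_le_sub_one_of_pos (by linarith : 0 < z + 1)]
    gcongr ?_ / ?_
    · exact mul_le_mul_of_nonneg_right (sqrt_le_sqrt hlog) (sqrt_nonneg z)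
    · linarith
  _ = z / (2 * (√z + 1)) := by rw [mul_self_sqrt hz]

/-- Lemma 7.2: For every real `z > 0`, the supremum over `λ > 0` of
`λ·z − exp(λ²) + 1` is at least `√(log(z+1)) · z^(3/2) / (4·√z + 8)`. -/
theorem sup_lower_bound (z : ℝ) (hz : 0 < z) :
    Real.sqrt (Real.log (z + 1)) * z ^ ((3 : ℝ) / 2) / (4 * Real.sqrt z + 8) ≤
      sSup {y : ℝ | ∃ l : ℝ, 0 < l ∧ y = l * z - Real.exp (l ^ 2) + 1} := by
  set s := √z
  set L := log (z + 1)
  have hs : 0 ≤ s := sqrt_nonneg z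
  have hL : 0 < L := log_pos (by linarith)
  set l := min √(L / 2) (z / (2 * (s + 1)))
  have hl : 0 < l := lt_min (sqrt_pos.mpr (by positivity)) (by positivity)
  have hexp : exp (l ^ 2) ≤ s + 1 :=
    exp_sq_le_sqrt_add_one hz.le ((le_sqrt hl.le (by positivity)).1 (min_le_left _ _))
  have hlc : l * (s + 1) ≤ z / 2 := by
    have := (le_div_iff₀ (by positivity)).1 (min_le_right √(L / 2) (z / (2 * (s + 1))))
    linarith
  have hl_ge : √L * s / (2 * (s + 2)) ≤ l :=
    le_min (sqrt_mul_div_le_sqrt_half hL.le hs) (sqrt_log_mul_sqrt_div_le hz.le)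
  rw [rpow_three_halves hz.le]
  refine le_csSup_of_le (bddAbove_mul_sub_exp_sq z) ⟨l, hl, rfl⟩ ?_
  calc √L * (z * s) / (4 * s + 8)
      _ = √L * s / (2 * (s + 2)) * z / 2 := by
        field_simp
        ring
      _ ≤ l * z / 2 := by gcongr
      _ ≤ _ := half_mul_le_mul_sub_exp_sq hl.le hexp hlc
end

section
/- Let d ≥ 1, ρ > 0 and p ≥ 1 be such that the half ball B = {z ∈ ℝ^d : ‖z‖ ≤ ρ and z₁ > 0} can be written as a disjoint union B = B₁ ∪ … ∪ B_p of p sets each of diameter at most ρ. Then for every finite set ξ ⊂ ℝ^d, 2·p·T_ξ + p·N_ξ ≥ Σ_{x ∈ ξ} deg_r(x)², where the right-degree is deg_r(x) = #((x + B) ∩ ξ). The same inequality holds with the left-degree deg_l(x) = #((x − B) ∩ ξ) in place of deg_r. -/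
open scoped Classical

/-- Number of edges of the disk graph with radius `ρ` on the finite set `ξ ⊂ ℝ^d`. -/
noncomputable def diskN {d : ℕ} (ρ : ℝ) (ξ : Finset (EuclideanSpace ℝ (Fin d))) : ℕ :=
  ((ξ.powersetCard 2).filter fun e => ∀ x ∈ e, ∀ y ∈ e, x ≠ y → dist x y ≤ ρ).card

/-- Number of triangles of the disk graph with radius `ρ` on the finite set `ξ ⊂ ℝ^d`. -/
noncomputable def diskT {d : ℕ} (ρ : ℝ) (ξ : Finset (EuclideanSpace ℝ (Fin d))) : ℕ :=
  ((ξ.powersetCard 3).filter fun e => ∀ x ∈ e, ∀ y ∈ e, x ≠ y → dist x y ≤ ρ).card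

/-! Cover the right-neighbourhood `x + B` of each vertex by the translates `x + Bᵢ`, of sizes
`nᵢ(x)`. By Cauchy–Schwarz `deg_r(x)² ≤ p · Σᵢ nᵢ(x)²`, and `nᵢ(x)²` counts the ordered pairs
`(y, z)` in `x + Bᵢ`. The diagonal pairs add up to `Σₓ deg_r(x) ≤ N`, because `y - x ∈ B` orients
every edge upwards in the first coordinate. An off-diagonal pair spans a triangle `{x, y, z}`
(as `diam Bᵢ ≤ ρ`) whose first coordinate is strictly minimal at `x`, so every triangle arises
from at most two such pairs. The left-degree is the right-degree for `-B = ⋃ᵢ -Bᵢ`. -/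

open Finset Function

variable {α β : Type*}

lemma card_filter_exists_eq_sum_card_filter [DecidableEq α] {ι : Type*} [Fintype ι]
    (s : Finset α) (P : ι → α → Prop) [∀ i, DecidablePred (P i)]
    [DecidablePred fun a => ∃ i, P i a] (hP : ∀ a i j, P i a → P j a → i = j) :
    #(s.filter fun a => ∃ i, P i a) = ∑ i, #(s.filter (P i)) := by
  rw [← card_biUnion]
  · congr 1
    ext a
    simp
  · intro i _ j _ hij
    exact disjoint_filter.2 fun a _ hi hj => hij (hP a i j hi hj)

lemma sum_card_filter_eq_card_filter_product (s : Finset α) (t : Finset β) (R : α → β → Prop)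
    [∀ a, DecidablePred (R a)] [DecidablePred fun q : α × β => R q.1 q.2] :
    ∑ a ∈ s, #(t.filter (R a)) = #((s ×ˢ t).filter fun q => R q.1 q.2) := by
  simp only [card_filter, sum_product]
  congr!

lemma card_sq_eq_card_add_card_offDiag (s : Finset α) : #s ^ 2 = #s + #s.offDiag := by
  have := Nat.le_mul_self #s
  rw [offDiag_card, sq]
  omega

lemma offDiag_filter [DecidableEq α] (s : Finset α) (P : α → Prop) [DecidablePred P] :
    (s.filter P).offDiag = (s ×ˢ s).filter fun q => P q.1 ∧ P q.2 ∧ q.1 ≠ q.2 := by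
  ext q
  simp only [mem_offDiag, mem_filter, mem_product]
  tauto

section StrictMin

variable [Preorder β]

def IsStrictMinOn (f : α → β) (s : Finset α) (a : α) : Prop :=
  ∀ c ∈ s, c ≠ a → f a < f c

variable {f : α → β}

lemma IsStrictMinOn.eq {s : Finset α} {a b : α} (ha : IsStrictMinOn f s a)
    (hb : IsStrictMinOn f s b) (has : a ∈ s) (hbs : b ∈ s) : a = b := by
  by_contra hab
  exact lt_asymm (ha b hbs (Ne.symm hab)) (hb a has hab)

variable [DecidableEq α]

lemma isStrictMinOn_pair {x y : α} (hy : f x < f y) : IsStrictMinOn f {x, y} x := by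
  simp only [IsStrictMinOn, mem_insert, mem_singleton]
  rintro c (rfl | rfl) hc
  exacts [absurd rfl hc, hy]

lemma isStrictMinOn_triple {x y z : α} (hy : f x < f y) (hz : f x < f z) :
    IsStrictMinOn f {x, y, z} x := by
  simp only [IsStrictMinOn, mem_insert, mem_singleton]
  rintro c (rfl | rfl | rfl) hc
  exacts [absurd rfl hc, hy, hz]

lemma eq_of_pair_eq_of_lt {x y x' y' : α} (hy : f x < f y) (hy' : f x' < f y')
    (h : ({x, y} : Finset α) = {x', y'}) : (x', y') = (x, y) := by
  have hx : x' = x := by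
    have hmin' := isStrictMinOn_pair hy'
    rw [← h] at hmin'
    exact hmin'.eq (isStrictMinOn_pair hy) (by simp [h]) (by simp)
  subst hx
  have hy_mem : y' ∈ ({x', y} : Finset α) := h ▸ by simp
  rcases mem_insert.1 hy_mem with rfl | hy_eq
  · exact absurd hy' (lt_irrefl _)
  · rw [mem_singleton.1 hy_eq]

lemma eq_or_eq_swap_of_triple_eq_of_lt {x y z x' y' z' : α} (hy : f x < f y) (hz : f x < f z)
    (hy' : f x' < f y') (hz' : f x' < f z') (hyz' : y' ≠ z')
    (h : ({x, y, z} : Finset α) = {x', y', z'}) :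
    (x', y', z') = (x, y, z) ∨ (x', y', z') = (x, z, y) := by
  have hx : x' = x := by
    have hmin' := isStrictMinOn_triple hy' hz'
    rw [← h] at hmin'
    exact hmin'.eq (isStrictMinOn_triple hy hz) (by simp [h]) (by simp)
  subst hx
  have hy_mem : y' ∈ ({x', y, z} : Finset α) := h ▸ by simp
  have hz_mem : z' ∈ ({x', y, z} : Finset α) := h ▸ by simp
  simp only [mem_insert, mem_singleton] at hy_mem hz_mem
  rcases hy_mem with rfl | rfl | rfl <;> rcases hz_mem with rfl | rfl | rfl <;> simp_all

end StrictMin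

noncomputable def diskCliques [Dist α] [DecidableEq α] (ρ : ℝ) (s : Finset α) (k : ℕ) :
    Finset (Finset α) :=
  (s.powersetCard k).filter fun e => ∀ x ∈ e, ∀ y ∈ e, x ≠ y → dist x y ≤ ρ

lemma diskN_eq_card_diskCliques {d : ℕ} (ρ : ℝ) (ξ : Finset (EuclideanSpace ℝ (Fin d))) :
    diskN ρ ξ = #(diskCliques ρ ξ 2) := rfl

lemma diskT_eq_card_diskCliques {d : ℕ} (ρ : ℝ) (ξ : Finset (EuclideanSpace ℝ (Fin d))) :
    diskT ρ ξ = #(diskCliques ρ ξ 3) := rfl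

section Cliques

variable [PseudoMetricSpace α] [DecidableEq α] [Preorder β] (f : α → β) (ρ : ℝ) (s : Finset α)

lemma card_filter_lt_le_card_diskCliques_two :
    #((s ×ˢ s).filter fun q => f q.1 < f q.2 ∧ dist q.1 q.2 ≤ ρ) ≤ #(diskCliques ρ s 2) := by
  refine card_le_card_of_injOn (fun q => {q.1, q.2}) ?_ ?_
  · rintro ⟨x, y⟩ hq
    simp only [mem_coe, mem_filter, mem_product] at hq
    obtain ⟨⟨hx, hy⟩, hlt, hdist⟩ := hq
    have hne : x ≠ y := fun h => (h ▸ hlt).false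
    simp only [diskCliques, coe_filter, mem_powersetCard]
    refine ⟨⟨insert_subset hx (singleton_subset_iff.2 hy), card_pair hne⟩, ?_⟩
    simp [dist_comm y x, hdist]
  · rintro ⟨x, y⟩ hq ⟨x', y'⟩ hq' h
    simp only [mem_coe, mem_filter, mem_product] at hq hq'
    exact (eq_of_pair_eq_of_lt hq.2.1 hq'.2.1 h).symm

lemma card_filter_lt_lt_le_two_mul_card_diskCliques_three :
    #((s ×ˢ s ×ˢ s).filter fun t => t.2.1 ≠ t.2.2 ∧ f t.1 < f t.2.1 ∧ f t.1 < f t.2.2 ∧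
      dist t.1 t.2.1 ≤ ρ ∧ dist t.1 t.2.2 ≤ ρ ∧ dist t.2.1 t.2.2 ≤ ρ) ≤
      2 * #(diskCliques ρ s 3) := by
  set A := (s ×ˢ s ×ˢ s).filter fun t => t.2.1 ≠ t.2.2 ∧ f t.1 < f t.2.1 ∧ f t.1 < f t.2.2 ∧
    dist t.1 t.2.1 ≤ ρ ∧ dist t.1 t.2.2 ≤ ρ ∧ dist t.2.1 t.2.2 ≤ ρ with hA
  refine card_le_mul_card_image_of_maps_to (f := fun t => {t.1, t.2.1, t.2.2}) ?_ 2 ?_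
  · rintro ⟨x, y, z⟩ ht
    simp only [hA, mem_filter, mem_product] at ht
    obtain ⟨⟨hx, hy, hz⟩, hyz, hxy, hxz, dxy, dxz, dyz⟩ := ht
    have hxy : x ≠ y := fun h => (h ▸ hxy).false
    have hxz : x ≠ z := fun h => (h ▸ hxz).false
    simp only [diskCliques, mem_filter, mem_powersetCard]
    refine ⟨⟨?_, card_eq_three.2 ⟨x, y, z, hxy, hxz, hyz, rfl⟩⟩, ?_⟩
    · simp [insert_subset_iff, hx, hy, hz]
    · simp [dist_comm y x, dist_comm z x, dist_comm z y, dxy, dxz, dyz]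
  · intro e _
    rcases (A.filter fun t => {t.1, t.2.1, t.2.2} = e).eq_empty_or_nonempty with
      h | ⟨⟨x, y, z⟩, ht⟩
    · simp [h]
    refine (card_le_card fun t ht' => ?_).trans (card_le_two (a := (x, y, z)) (b := (x, z, y)))
    obtain ⟨x', y', z'⟩ := t
    simp only [hA, mem_filter] at ht ht'
    rw [← ht'.2] at ht
    simpa using eq_or_eq_swap_of_triple_eq_of_lt ht.1.2.2.1 ht.1.2.2.2.1 ht'.1.2.2.1
      ht'.1.2.2.2.1 ht'.1.2.1 ht.2

end Cliques

section HalfBall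

variable {E ι : Type*} [NormedAddCommGroup E] [DecidableEq E] [Fintype ι]

theorem sum_sq_card_filter_sub_mem_iUnion_le (ℓ : E →+ ℝ) {ρ : ℝ} {parts : ι → Set E}
    (hdisj : Pairwise (Disjoint on parts)) (hhalf : ∀ i, ∀ z ∈ parts i, ‖z‖ ≤ ρ ∧ 0 < ℓ z)
    (hdiam : ∀ i, Metric.diam (parts i) ≤ ρ) (ξ : Finset E) :
    ∑ x ∈ ξ, #(ξ.filter fun y => y - x ∈ ⋃ i, parts i) ^ 2 ≤
      Fintype.card ι * (#(diskCliques ρ ξ 2) + 2 * #(diskCliques ρ ξ 3)) := by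
  have hunique : ∀ z i j, z ∈ parts i → z ∈ parts j → i = j := fun z i j hi hj =>
    hdisj.eq (Set.not_disjoint_iff.2 ⟨z, hi, hj⟩)
  have hedge : ∀ x y i, y - x ∈ parts i → ℓ x < ℓ y ∧ dist x y ≤ ρ := by
    intro x y i h
    obtain ⟨hnorm, hpos⟩ := hhalf i _ h
    rw [map_sub, sub_pos] at hpos
    rw [dist_comm, dist_eq_norm]
    exact ⟨hpos, hnorm⟩
  have hclose : ∀ x y z i, y - x ∈ parts i → z - x ∈ parts i → dist y z ≤ ρ := by
    intro x y z i hy hz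
    have hbdd : Bornology.IsBounded (parts i) :=
      Metric.isBounded_closedBall.subset fun w hw => mem_closedBall_zero_iff.2 (hhalf i w hw).1
    rw [← dist_sub_right y z x]
    exact (Metric.dist_le_diam_of_mem hbdd hy hz).trans (hdiam i)
  set n : E → ι → Finset E := fun x i => ξ.filter fun y => y - x ∈ parts i
  have hdeg : ∀ x, #(ξ.filter fun y => y - x ∈ ⋃ i, parts i) = ∑ i, #(n x i) := fun x => by
    simp only [Set.mem_iUnion]
    exact card_filter_exists_eq_sum_card_filter _ _ fun y i j => hunique _ i j
  have hpairs : ∑ x ∈ ξ, ∑ i, #(n x i) ≤ #(diskCliques ρ ξ 2) := by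
    rw [← sum_congr rfl fun x _ => hdeg x, sum_card_filter_eq_card_filter_product]
    refine (card_le_card (monotone_filter_right _ ?_)).trans
      (card_filter_lt_le_card_diskCliques_two ℓ ρ ξ)
    rintro ⟨x, y⟩ - h
    obtain ⟨i, h⟩ := Set.mem_iUnion.1 h
    exact hedge x y i h
  have htriples : ∑ x ∈ ξ, ∑ i, #(n x i).offDiag ≤ 2 * #(diskCliques ρ ξ 3) := by
    have hoff : ∀ x, ∑ i, #(n x i).offDiag =
        #((ξ ×ˢ ξ).filter fun q => ∃ i, q.1 - x ∈ parts i ∧ q.2 - x ∈ parts i ∧ q.1 ≠ q.2) := by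
      intro x
      simp only [n, offDiag_filter]
      exact (card_filter_exists_eq_sum_card_filter _ _ fun q i j hi hj =>
        hunique _ i j hi.1 hj.1).symm
    rw [sum_congr rfl fun x _ => hoff x, sum_card_filter_eq_card_filter_product]
    refine (card_le_card (monotone_filter_right _ ?_)).trans
      (card_filter_lt_lt_le_two_mul_card_diskCliques_three ℓ ρ ξ)
    rintro ⟨x, y, z⟩ - ⟨i, hy, hz, hyz⟩
    exact ⟨hyz, (hedge x y i hy).1, (hedge x z i hz).1, (hedge x y i hy).2, (hedge x z i hz).2,
      hclose x y z i hy hz⟩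
  calc ∑ x ∈ ξ, #(ξ.filter fun y => y - x ∈ ⋃ i, parts i) ^ 2
      ≤ ∑ x ∈ ξ, Fintype.card ι * ∑ i, #(n x i) ^ 2 := by
        gcongr with x
        rw [hdeg]
        exact sq_sum_le_card_mul_sum_sq
    _ = Fintype.card ι * (∑ x ∈ ξ, ∑ i, #(n x i) + ∑ x ∈ ξ, ∑ i, #(n x i).offDiag) := by
        simp only [card_sq_eq_card_add_card_offDiag, sum_add_distrib]
        rw [← mul_sum, ← sum_add_distrib]
    _ ≤ Fintype.card ι * (#(diskCliques ρ ξ 2) + 2 * #(diskCliques ρ ξ 3)) := by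
        gcongr

theorem sum_sq_card_filter_sub_mem_iUnion_le' (ℓ : E →+ ℝ) {ρ : ℝ} {parts : ι → Set E}
    (hdisj : Pairwise (Disjoint on parts)) (hhalf : ∀ i, ∀ z ∈ parts i, ‖z‖ ≤ ρ ∧ 0 < ℓ z)
    (hdiam : ∀ i, Metric.diam (parts i) ≤ ρ) (ξ : Finset E) :
    ∑ x ∈ ξ, #(ξ.filter fun y => x - y ∈ ⋃ i, parts i) ^ 2 ≤
      Fintype.card ι * (#(diskCliques ρ ξ 2) + 2 * #(diskCliques ρ ξ 3)) := by
  have hneg := sum_sq_card_filter_sub_mem_iUnion_le (-ℓ) (parts := fun i => -parts i)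
    (fun i j hij => (hdisj hij).preimage Neg.neg)
    (fun i z hz => by simpa using hhalf i (-z) hz)
    (fun i => by rw [← Set.image_neg_eq_neg, isometry_neg.diam_image]; exact hdiam i) ξ
  simpa only [← Set.iUnion_neg, Set.mem_neg, neg_sub] using hneg

end HalfBall

theorem triangle_edge_degree_bound_general (d : ℕ) (hd : 0 < d) (ρ : ℝ)
    (p : ℕ)
    (parts : Fin p → Set (EuclideanSpace ℝ (Fin d)))
    (hdisj : Pairwise (Function.onFun Disjoint parts))
    (hunion : (⋃ i, parts i) =
      {z : EuclideanSpace ℝ (Fin d) | ‖z‖ ≤ ρ ∧ 0 < z ⟨0, hd⟩})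
    (hdiam : ∀ i, Metric.diam (parts i) ≤ ρ)
    (ξ : Finset (EuclideanSpace ℝ (Fin d))) :
    (∑ x ∈ ξ, ((ξ.filter fun y => ‖y - x‖ ≤ ρ ∧ 0 < (y - x) ⟨0, hd⟩).card) ^ 2
        ≤ 2 * p * diskT ρ ξ + p * diskN ρ ξ) ∧
    (∑ x ∈ ξ, ((ξ.filter fun y => ‖x - y‖ ≤ ρ ∧ 0 < (x - y) ⟨0, hd⟩).card) ^ 2
        ≤ 2 * p * diskT ρ ξ + p * diskN ρ ξ) := by
  let ℓ : EuclideanSpace ℝ (Fin d) →+ ℝ := (EuclideanSpace.proj (⟨0, hd⟩ : Fin d) : _ →L[ℝ] ℝ)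
  have hhalf : ∀ i, ∀ z ∈ parts i, ‖z‖ ≤ ρ ∧ 0 < ℓ z := fun i z hz => by
    have hz := Set.mem_iUnion_of_mem i hz
    rwa [hunion] at hz
  have hcount : Fintype.card (Fin p) * (#(diskCliques ρ ξ 2) + 2 * #(diskCliques ρ ξ 3)) =
      2 * p * diskT ρ ξ + p * diskN ρ ξ := by
    rw [Fintype.card_fin, diskN_eq_card_diskCliques, diskT_eq_card_diskCliques]
    ring
  have hright := sum_sq_card_filter_sub_mem_iUnion_le ℓ hdisj hhalf hdiam ξ
  have hleft := sum_sq_card_filter_sub_mem_iUnion_le' ℓ hdisj hhalf hdiam ξ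
  rw [hcount, hunion] at hright hleft
  exact ⟨by simpa only [Set.mem_ofPred_eq] using hright,
    by simpa only [Set.mem_ofPred_eq] using hleft⟩

/-- Lemma 6.2: if the half ball `B = {z : ‖z‖ ≤ ρ, z₁ > 0}` can be partitioned into `p`
sets of diameter at most `ρ`, then `2·p·T_ξ + p·N_ξ ≥ Σ_{x∈ξ} deg_r(x)²`, and the same
with the left-degree instead of the right-degree. -/
theorem triangle_edge_degree_bound (d : ℕ) (hd : 0 < d) (ρ : ℝ) (hρ : 0 < ρ)
    (p : ℕ) (hp : 1 ≤ p)
    (parts : Fin p → Set (EuclideanSpace ℝ (Fin d)))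
    (hdisj : Pairwise (Function.onFun Disjoint parts))
    (hunion : (⋃ i, parts i) =
      {z : EuclideanSpace ℝ (Fin d) | ‖z‖ ≤ ρ ∧ 0 < z ⟨0, hd⟩})
    (hdiam : ∀ i, Metric.diam (parts i) ≤ ρ)
    (ξ : Finset (EuclideanSpace ℝ (Fin d))) :
    (∑ x ∈ ξ, ((ξ.filter fun y => ‖y - x‖ ≤ ρ ∧ 0 < (y - x) ⟨0, hd⟩).card) ^ 2
        ≤ 2 * p * diskT ρ ξ + p * diskN ρ ξ) ∧
    (∑ x ∈ ξ, ((ξ.filter fun y => ‖x - y‖ ≤ ρ ∧ 0 < (x - y) ⟨0, hd⟩).card) ^ 2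
        ≤ 2 * p * diskT ρ ξ + p * diskN ρ ξ) :=
  triangle_edge_degree_bound_general d hd ρ p parts hdisj hunion hdiam ξ
end

section
/- Let d ≥ 1, ρ > 0 and p ≥ 1 be such that the half ball B = {z ∈ ℝ^d : ‖z‖ ≤ ρ and z₁ > 0} can be written as a disjoint union of p sets each of diameter at most ρ. Then for every finite set ξ ⊂ ℝ^d, Σ_{x ∈ ξ} deg(x)² ≤ (8√2/3)·p·N_ξ^{3/2} + 4·p·N_ξ ≤ (8√2/3 + 4)·p·N_ξ^{3/2}. -/
open scoped Classical

/-- Degree of the vertex `x` in the disk graph with radius `ρ` on the finite set `ξ ⊂ ℝ^d`. -/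
noncomputable def diskDeg {d : ℕ} (ρ : ℝ) (ξ : Finset (EuclideanSpace ℝ (Fin d)))
    (x : EuclideanSpace ℝ (Fin d)) : ℕ :=
  (ξ.filter fun y => y ≠ x ∧ dist x y ≤ ρ).card

/-!
Orient each edge of the disk graph upwards along a direction `u` separating the points of `ξ`.
An isometry taking `u / ‖u‖` to the first basis vector turns the partition of the half ball into
one of `{z : ‖z‖ ≤ ρ, ⟪u, z⟫ > 0}`, which contains the vector `y - x` of every up-edge `x → y`.
Coloring that edge by the part containing `y - x` makes each color class of up-neighbors of `x` a
clique, and likewise for down-neighbors and `x - y`. Cauchy–Schwarz over the `p` colors gives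
`#up(x)² ≤ p (2 s(x) + #up(x))`, where each of the `s(x)` same-colored pairs spans a triangle with
lowest vertex `x`; hence `Σ deg² ≤ 8 p T + 4 p N` for the number `T` of triangles. Counting each
triangle at each of its vertices, `3 T ≤ Σₓ e(x)`, where the number `e(x)` of edges among the
neighbors of `x` is at most `min(N, deg(x)² / 2) ≤ deg(x) √(N / 2)`; as `Σ deg = 2 N`, this gives
`3 T ≤ √2 N^{3/2}`.
-/

open Finset
open scoped RealInnerProductSpace

section Counting

variable {V : Type*}

theorem sq_card_le_card_mul_card_filter_eq {ι : Type*} [Fintype ι] (s : Finset V) (g : V → ι) :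
    #s ^ 2 ≤ Fintype.card ι * #{q ∈ s ×ˢ s | g q.1 = g q.2} := by
  have hfib : ∀ i, {q ∈ {q ∈ s ×ˢ s | g q.1 = g q.2} | g q.1 = i} =
      {x ∈ s | g x = i} ×ˢ {x ∈ s | g x = i} := fun i => by
    ext q; simp only [mem_filter, mem_product]; grind
  calc #s ^ 2 = (∑ i, #{x ∈ s | g x = i}) ^ 2 := by
        rw [card_eq_sum_card_fiberwise fun x _ => mem_univ (g x)]
    _ ≤ Fintype.card ι * ∑ i, #{x ∈ s | g x = i} ^ 2 := sq_sum_le_card_mul_sum_sq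
    _ = Fintype.card ι * #{q ∈ s ×ˢ s | g q.1 = g q.2} := by
        rw [card_eq_sum_card_fiberwise fun q _ => mem_univ (g q.1)]
        simp only [hfib, card_product, sq]

theorem card_filter_product_eq_two_mul_card_filter_lt_add_card (s : Finset V) (f : V → ℝ)
    (hf : Set.InjOn f s) (P : V → V → Prop) [DecidableRel P] (hPsymm : ∀ y z, P y z → P z y)
    (hPrefl : ∀ y, P y y) :
    #{q ∈ s ×ˢ s | P q.1 q.2} = 2 * #{q ∈ s ×ˢ s | P q.1 q.2 ∧ f q.1 < f q.2} + #s := by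
  have hswap : #{q ∈ s ×ˢ s | P q.1 q.2 ∧ f q.2 < f q.1} =
      #{q ∈ s ×ˢ s | P q.1 q.2 ∧ f q.1 < f q.2} := by
    refine card_nbij' Prod.swap Prod.swap ?_ ?_ (fun _ _ => rfl) (fun _ _ => rfl) <;>
    · intro q hq
      simp only [coe_filter, mem_product, Set.mem_ofPred_eq] at hq ⊢
      exact ⟨hq.1.symm, hPsymm _ _ hq.2.1, hq.2.2⟩
  have hdiag : {q ∈ s ×ˢ s | P q.1 q.2 ∧ f q.1 = f q.2} = s.diag := by
    ext ⟨y, z⟩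
    simp only [mem_filter, mem_product, mem_diag]
    constructor
    · rintro ⟨⟨hy, hz⟩, -, hyz⟩
      exact ⟨hy, hf hy hz hyz⟩
    · rintro ⟨hy, rfl⟩
      exact ⟨⟨hy, hy⟩, hPrefl y, rfl⟩
  have hsplit : #{q ∈ s ×ˢ s | P q.1 q.2} = #{q ∈ s ×ˢ s | P q.1 q.2 ∧ f q.1 < f q.2} +
      #{q ∈ s ×ˢ s | P q.1 q.2 ∧ f q.2 < f q.1} + #{q ∈ s ×ˢ s | P q.1 q.2 ∧ f q.1 = f q.2} := by
    simp only [card_filter, ← sum_add_distrib]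
    refine sum_congr rfl fun q _ => ?_
    rcases lt_trichotomy (f q.1) (f q.2) with h | h | h <;> split_ifs <;> grind
  rw [hsplit, hswap, hdiag, diag_card, two_mul]

theorem sq_card_le_card_mul_two_mul_card_filter_lt_add_card {ι : Type*} [Fintype ι]
    (s : Finset V) (f : V → ℝ) (hf : Set.InjOn f s) (g : V → ι) :
    #s ^ 2 ≤ Fintype.card ι * (2 * #{q ∈ s ×ˢ s | g q.1 = g q.2 ∧ f q.1 < f q.2} + #s) := by
  rw [← card_filter_product_eq_two_mul_card_filter_lt_add_card s f hf (fun y z => g y = g z)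
    (fun _ _ => Eq.symm) fun _ => rfl]
  exact sq_card_le_card_mul_card_filter_eq s g

end Counting

theorem two_mul_le_mul_sqrt_of_le {m d N : ℝ} (hmN : m ≤ N) (hmd : 2 * m ≤ d ^ 2) (hd : 0 ≤ d) :
    2 * m ≤ d * √(2 * N) := by
  rcases le_or_gt m 0 with hm | hm
  · nlinarith [Real.sqrt_nonneg (2 * N)]
  have hsq : √(2 * N) ^ 2 = 2 * N := Real.sq_sqrt (by linarith)
  nlinarith [Real.sqrt_nonneg (2 * N), mul_nonneg hd (Real.sqrt_nonneg (2 * N))]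

theorem sum_le_sqrt_two_mul_rpow {V : Type*} {s : Finset V} {m d : V → ℝ} {N : ℝ}
    (hmN : ∀ x ∈ s, m x ≤ N) (hmd : ∀ x ∈ s, 2 * m x ≤ d x ^ 2) (hd : ∀ x ∈ s, 0 ≤ d x)
    (hsum : ∑ x ∈ s, d x ≤ 2 * N) :
    ∑ x ∈ s, m x ≤ √2 * N ^ (3 / 2 : ℝ) := by
  have hN : 0 ≤ N := by linarith [sum_nonneg hd]
  have hrpow : N ^ (3 / 2 : ℝ) = N * √N := by
    rw [show (3 / 2 : ℝ) = 1 + 1 / 2 by norm_num, Real.rpow_add' hN (by norm_num), Real.rpow_one,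
      Real.sqrt_eq_rpow]
  calc ∑ x ∈ s, m x ≤ ∑ x ∈ s, d x * √(2 * N) / 2 :=
        sum_le_sum fun x hx => by
          linarith [two_mul_le_mul_sqrt_of_le (hmN x hx) (hmd x hx) (hd x hx)]
    _ = (∑ x ∈ s, d x) * √(2 * N) / 2 := by rw [sum_mul, sum_div]
    _ ≤ 2 * N * √(2 * N) / 2 := by gcongr
    _ = √2 * N ^ (3 / 2 : ℝ) := by rw [hrpow, Real.sqrt_mul zero_le_two]; ring

section OrientedGraph

variable {V ι : Type*} (G : SimpleGraph V) (f : V → ℝ) (s : Finset V)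

noncomputable def upNbrs (x : V) : Finset V := {y ∈ s | G.Adj x y ∧ f x < f y}

noncomputable def downNbrs (x : V) : Finset V := {y ∈ s | G.Adj x y ∧ f y < f x}

noncomputable def upEdges : Finset (V × V) := {q ∈ s ×ˢ s | G.Adj q.1 q.2 ∧ f q.1 < f q.2}

noncomputable def upTriangles : Finset (V × V × V) :=
  {t ∈ s ×ˢ s ×ˢ s | G.Adj t.1 t.2.1 ∧ G.Adj t.1 t.2.2 ∧ G.Adj t.2.1 t.2.2 ∧
    f t.1 < f t.2.1 ∧ f t.2.1 < f t.2.2}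

def IsCliqueEdgeColoring (c : V → V → ι) : Prop :=
  (∀ x y z, G.Adj x y → G.Adj x z → f x < f y → f x < f z → c x y = c x z → y ≠ z → G.Adj y z) ∧
  (∀ x y z, G.Adj y x → G.Adj z x → f y < f x → f z < f x → c y x = c z x → y ≠ z → G.Adj y z)

variable {G f s}

theorem card_filter_adj_eq (hf : Set.InjOn f s) {x : V} (hx : x ∈ s) :
    #{y ∈ s | G.Adj x y} = #(upNbrs G f s x) + #(downNbrs G f s x) := by
  simp only [upNbrs, downNbrs, card_filter, ← sum_add_distrib]
  refine sum_congr rfl fun y hy => ?_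
  have : G.Adj x y → f x ≠ f y := fun h he => h.ne (hf hx hy he)
  split_ifs <;> grind

theorem sum_card_upNbrs : ∑ x ∈ s, #(upNbrs G f s x) = #(upEdges G f s) := by
  simp only [upNbrs, upEdges, card_filter, sum_product]

theorem sum_card_downNbrs : ∑ x ∈ s, #(downNbrs G f s x) = #(upEdges G f s) := by
  simp only [downNbrs, upEdges, card_filter, sum_product]
  rw [sum_comm]
  simp only [G.adj_comm]

theorem sum_card_filter_adj (hf : Set.InjOn f s) :
    ∑ x ∈ s, #{y ∈ s | G.Adj x y} = 2 * #(upEdges G f s) := by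
  rw [sum_congr rfl fun x hx => card_filter_adj_eq hf hx, sum_add_distrib, sum_card_upNbrs,
    sum_card_downNbrs, two_mul]

theorem sum_card_filter_upTriangles_eq {π : V × V × V → V}
    (hπ : ∀ t ∈ upTriangles G f s, π t ∈ s) :
    ∑ x ∈ s, #{t ∈ upTriangles G f s | π t = x} = #(upTriangles G f s) :=
  (card_eq_sum_card_fiberwise hπ).symm

theorem card_upEdges_mono {t : Finset V} (hts : t ⊆ s) :
    #(upEdges G f t) ≤ #(upEdges G f s) :=
  card_le_card <| filter_subset_filter _ (product_subset_product hts hts)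

theorem two_mul_card_upEdges_le (hf : Set.InjOn f s) : 2 * #(upEdges G f s) ≤ #s ^ 2 := by
  have h := card_filter_product_eq_two_mul_card_filter_lt_add_card s f hf (fun _ _ => True)
    (fun _ _ _ => trivial) fun _ => trivial
  have hsub : upEdges G f s ⊆ {q ∈ s ×ˢ s | True ∧ f q.1 < f q.2} :=
    monotone_filter_right _ fun _ _ hq => ⟨trivial, hq.2⟩
  have := card_le_card hsub
  rw [filter_true, card_product] at h
  rw [sq, h]
  omega

theorem three_mul_card_upTriangles_le :
    3 * #(upTriangles G f s) ≤ ∑ x ∈ s, #(upEdges G f {y ∈ s | G.Adj x y}) := by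
  -- the `i`-th rotation of an increasing triangle puts its `i`-th vertex first, followed by the
  -- up-edge formed by the other two; the position of the first vertex relative to them recovers `i`
  rw [← card_sigma, mul_comm, ← Fintype.card_fin 3, ← card_univ, ← card_product]
  refine card_le_card_of_injOn (fun p => ![(⟨p.1.1, p.1.2.1, p.1.2.2⟩ : (_ : V) × V × V),
    ⟨p.1.2.1, p.1.1, p.1.2.2⟩, ⟨p.1.2.2, p.1.1, p.1.2.1⟩] p.2) ?_ ?_
  · rintro ⟨⟨x, y, z⟩, i⟩ h
    simp only [upTriangles, coe_product, coe_filter, Set.mem_prod, Set.mem_ofPred_eq,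
      mem_product] at h
    fin_cases i <;>
      simp only [upEdges, coe_sigma, coe_filter, mem_product, mem_filter, Set.mem_sigma_iff,
        SetLike.mem_coe, Set.mem_ofPred_eq, Fin.isValue, Fin.reduceFinMk, Fin.zero_eta, Fin.mk_one,
        Matrix.cons_val_zero, Matrix.cons_val_one, Matrix.cons_val] <;>
      grind [SimpleGraph.Adj.symm]
  · rintro ⟨⟨x, y, z⟩, i⟩ h ⟨⟨x', y', z'⟩, i'⟩ h' heq
    simp only [upTriangles, coe_product, coe_filter, Set.mem_prod, Set.mem_ofPred_eq,
      mem_product] at h h'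
    fin_cases i <;> fin_cases i' <;>
      simp only [Fin.isValue, Fin.reduceFinMk, Fin.zero_eta, Fin.mk_one, Matrix.cons_val_zero,
        Matrix.cons_val_one, Matrix.cons_val, Sigma.mk.injEq, heq_eq_eq, Prod.mk.injEq] at heq <;>
      grind

theorem three_mul_card_upTriangles_le_rpow (hf : Set.InjOn f s) {N : ℝ}
    (hN : (#(upEdges G f s) : ℝ) ≤ N) :
    3 * (#(upTriangles G f s) : ℝ) ≤ √2 * N ^ (3 / 2 : ℝ) := by
  have hsub : ∀ x, {y ∈ s | G.Adj x y} ⊆ s := fun x => filter_subset _ _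
  calc 3 * (#(upTriangles G f s) : ℝ)
      ≤ ∑ x ∈ s, (#(upEdges G f {y ∈ s | G.Adj x y}) : ℝ) := by
        exact_mod_cast three_mul_card_upTriangles_le
    _ ≤ √2 * N ^ (3 / 2 : ℝ) := by
        refine sum_le_sqrt_two_mul_rpow (d := fun x => #{y ∈ s | G.Adj x y})
          (fun x _ => le_trans (by exact_mod_cast card_upEdges_mono (hsub x)) hN)
          (fun x _ => by exact_mod_cast two_mul_card_upEdges_le (hf.mono (hsub x)))
          (fun _ _ => Nat.cast_nonneg _) ?_
        rw [← Nat.cast_sum, sum_card_filter_adj hf]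
        push_cast
        linarith

variable [Fintype ι] {c : V → V → ι}

theorem sq_card_upNbrs_le (hf : Set.InjOn f s) (hc : IsCliqueEdgeColoring G f c) {x : V}
    (hx : x ∈ s) :
    #(upNbrs G f s x) ^ 2 ≤
      Fintype.card ι * (2 * #{t ∈ upTriangles G f s | t.1 = x} + #(upNbrs G f s x)) := by
  set O := upNbrs G f s x
  calc #O ^ 2 ≤ Fintype.card ι * (2 * #{q ∈ O ×ˢ O | c x q.1 = c x q.2 ∧ f q.1 < f q.2} + #O) :=
        sq_card_le_card_mul_two_mul_card_filter_lt_add_card O f (hf.mono (filter_subset _ _)) (c x)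
    _ ≤ _ := by
        gcongr
        refine card_le_card_of_injOn (fun q => (x, q.1, q.2)) (fun q hq => ?_)
          fun q _ q' _ h => by simpa [Prod.ext_iff] using h
        simp only [O, upNbrs, upTriangles, coe_filter, mem_product, mem_filter,
          Set.mem_ofPred_eq] at hq ⊢
        obtain ⟨⟨⟨hy, hxy, hfxy⟩, hz, hxz, hfxz⟩, hcol, hfyz⟩ := hq
        exact ⟨⟨⟨hx, hy, hz⟩, hxy, hxz, hc.1 x _ _ hxy hxz hfxy hfxz hcol
          (fun h => hfyz.ne (congrArg f h)), hfxy, hfyz⟩, trivial⟩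

theorem sq_card_downNbrs_le (hf : Set.InjOn f s) (hc : IsCliqueEdgeColoring G f c) {x : V}
    (hx : x ∈ s) :
    #(downNbrs G f s x) ^ 2 ≤
      Fintype.card ι * (2 * #{t ∈ upTriangles G f s | t.2.2 = x} + #(downNbrs G f s x)) := by
  set I := downNbrs G f s x
  calc #I ^ 2 ≤ Fintype.card ι * (2 * #{q ∈ I ×ˢ I | c q.1 x = c q.2 x ∧ f q.1 < f q.2} + #I) :=
        sq_card_le_card_mul_two_mul_card_filter_lt_add_card I f (hf.mono (filter_subset _ _))
          (c · x)
    _ ≤ _ := by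
        gcongr
        refine card_le_card_of_injOn (fun q => (q.1, q.2, x)) (fun q hq => ?_)
          fun q _ q' _ h => by simpa [Prod.ext_iff] using h
        simp only [I, downNbrs, upTriangles, coe_filter, mem_product, mem_filter,
          Set.mem_ofPred_eq] at hq ⊢
        obtain ⟨⟨⟨hy, hxy, hfyx⟩, hz, hxz, hfzx⟩, hcol, hfyz⟩ := hq
        exact ⟨⟨⟨hy, hz, hx⟩, hc.2 x _ _ hxy.symm hxz.symm hfyx hfzx hcol
          (fun h => hfyz.ne (congrArg f h)), hxy.symm, hxz.symm, hfyz, hfzx⟩, trivial⟩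

theorem sum_sq_card_filter_adj_le (hf : Set.InjOn f s) (hc : IsCliqueEdgeColoring G f c) :
    ∑ x ∈ s, #{y ∈ s | G.Adj x y} ^ 2 ≤
      8 * Fintype.card ι * #(upTriangles G f s) + 4 * Fintype.card ι * #(upEdges G f s) := by
  set k := Fintype.card ι
  have hfst := sum_card_filter_upTriangles_eq (G := G) (f := f) (s := s) (π := fun t => t.1)
    fun t ht => (mem_product.1 (mem_filter.1 ht).1).1
  have hlst := sum_card_filter_upTriangles_eq (G := G) (f := f) (s := s) (π := fun t => t.2.2)
    fun t ht => (mem_product.1 (mem_product.1 (mem_filter.1 ht).1).2).2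
  calc ∑ x ∈ s, #{y ∈ s | G.Adj x y} ^ 2
      ≤ ∑ x ∈ s, (2 * #(upNbrs G f s x) ^ 2 + 2 * #(downNbrs G f s x) ^ 2) := by
        refine sum_le_sum fun x hx => ?_
        rw [card_filter_adj_eq hf hx]
        nlinarith [sq_nonneg ((#(upNbrs G f s x) : ℤ) - #(downNbrs G f s x))]
    _ ≤ ∑ x ∈ s, (2 * (k * (2 * #{t ∈ upTriangles G f s | t.1 = x} + #(upNbrs G f s x))) +
          2 * (k * (2 * #{t ∈ upTriangles G f s | t.2.2 = x} + #(downNbrs G f s x)))) := by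
        gcongr with x hx
        exacts [sq_card_upNbrs_le hf hc hx, sq_card_downNbrs_le hf hc hx]
    _ = 8 * k * #(upTriangles G f s) + 4 * k * #(upEdges G f s) := by
        simp only [sum_add_distrib, ← mul_sum, hfst, hlst, sum_card_upNbrs, sum_card_downNbrs]
        ring

theorem sum_sq_card_filter_adj_le_rpow (hf : Set.InjOn f s) (hc : IsCliqueEdgeColoring G f c)
    {N : ℝ} (hN : (#(upEdges G f s) : ℝ) ≤ N) :
    ∑ x ∈ s, (#{y ∈ s | G.Adj x y} : ℝ) ^ 2 ≤
      8 * √2 / 3 * Fintype.card ι * N ^ (3 / 2 : ℝ) + 4 * Fintype.card ι * N := by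
  have hk : (0 : ℝ) ≤ Fintype.card ι := Nat.cast_nonneg _
  have htri := three_mul_card_upTriangles_le_rpow hf hN
  calc ∑ x ∈ s, (#{y ∈ s | G.Adj x y} : ℝ) ^ 2
      ≤ 8 * Fintype.card ι * #(upTriangles G f s) + 4 * Fintype.card ι * #(upEdges G f s) := by
        exact_mod_cast sum_sq_card_filter_adj_le hf hc
    _ ≤ 8 * √2 / 3 * Fintype.card ι * N ^ (3 / 2 : ℝ) + 4 * Fintype.card ι * N := by
        nlinarith [mul_le_mul_of_nonneg_left htri hk, mul_le_mul_of_nonneg_left hN hk]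

end OrientedGraph

theorem exists_coloring_of_iUnion_eq {X ι : Type*} [PseudoMetricSpace X] [Nonempty ι]
    {S : Set X} {ρ : ℝ} {parts : ι → Set X} (hunion : ⋃ i, parts i = S)
    (hdiam : ∀ i, Metric.diam (parts i) ≤ ρ) (hS : Bornology.IsBounded S) :
    ∃ κ : X → ι, ∀ z ∈ S, ∀ z' ∈ S, κ z = κ z' → dist z z' ≤ ρ := by
  have hκ : ∀ z, ∃ i, z ∈ S → z ∈ parts i := fun z => by
    by_cases hz : z ∈ S
    · obtain ⟨i, hi⟩ := Set.mem_iUnion.1 (hunion ▸ hz)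
      exact ⟨i, fun _ => hi⟩
    · exact ⟨Classical.arbitrary ι, fun h => absurd h hz⟩
  choose κ hκ using hκ
  refine ⟨κ, fun z hz z' hz' hzz' => ?_⟩
  have hbdd : Bornology.IsBounded (parts (κ z)) := hS.subset (hunion ▸ Set.subset_iUnion _ _)
  exact (Metric.dist_le_diam_of_mem hbdd (hκ z hz) (hzz' ▸ hκ z' hz')).trans (hdiam _)

def diskGraph {X : Type*} [PseudoMetricSpace X] (ρ : ℝ) : SimpleGraph X where
  Adj x y := x ≠ y ∧ dist x y ≤ ρ
  symm := ⟨fun x y h => ⟨h.1.symm, dist_comm x y ▸ h.2⟩⟩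
  loopless := ⟨fun _ h => h.1 rfl⟩

theorem diskGraph_adj {X : Type*} [PseudoMetricSpace X] {ρ : ℝ} {x y : X} :
    (diskGraph ρ).Adj x y ↔ x ≠ y ∧ dist x y ≤ ρ :=
  Iff.rfl

section Geometry

variable {E ι : Type*} [NormedAddCommGroup E] [InnerProductSpace ℝ E]

def halfBall (u : E) (ρ : ℝ) : Set E := {z | ‖z‖ ≤ ρ ∧ 0 < ⟪u, z⟫}

theorem exists_forall_inner_ne_zero {S : Set E} (hS : S.Finite) (h0 : (0 : E) ∉ S) :
    ∃ u : E, ∀ v ∈ S, ⟪v, u⟫ ≠ 0 := by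
  have := hS.to_subtype
  by_contra! h
  obtain ⟨v, hv⟩ := Subspace.exists_eq_top_of_iUnion_eq_univ (k := ℝ)
    (p := fun v : S => (ℝ ∙ (v : E))ᗮ) <| Set.eq_univ_of_forall fun u => by
      obtain ⟨v, hvS, hvu⟩ := h u
      exact Set.mem_iUnion.2 ⟨⟨v, hvS⟩, Submodule.mem_orthogonal_singleton_iff_inner_right.2 hvu⟩
  rw [Submodule.orthogonal_eq_top_iff, Submodule.span_singleton_eq_bot] at hv
  exact h0 (hv ▸ v.2)

theorem exists_linearIsometryEquiv_preimage_halfBall {e u : E} (he : ‖e‖ = 1) (hu : u ≠ 0)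
    (ρ : ℝ) : ∃ R : E ≃ₗᵢ[ℝ] E, R ⁻¹' halfBall e ρ = halfBall u ρ := by
  have hu₁ : ‖‖u‖⁻¹ • u‖ = ‖e‖ := by
    rw [norm_smul, norm_inv, norm_norm, inv_mul_cancel₀ (norm_ne_zero_iff.2 hu), he]
  set R := Submodule.reflection (ℝ ∙ (‖u‖⁻¹ • u - e))ᗮ
  have hR : R (‖u‖⁻¹ • u) = e := Submodule.reflection_sub hu₁
  refine ⟨R, Set.ext fun z => ?_⟩
  have hinner : ⟪e, R z⟫ = ‖u‖⁻¹ * ⟪u, z⟫ := by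
    rw [← hR, LinearIsometryEquiv.inner_map_map, real_inner_smul_left]
  simp only [halfBall, Set.mem_preimage, Set.mem_ofPred_eq, LinearIsometryEquiv.norm_map, hinner,
    mul_pos_iff_of_pos_left (inv_pos.2 (norm_pos_iff.2 hu))]

theorem isCliqueEdgeColoring_diskGraph {u : E} {ρ : ℝ} {κ : E → ι}
    (hκ : ∀ z ∈ halfBall u ρ, ∀ z' ∈ halfBall u ρ, κ z = κ z' → dist z z' ≤ ρ) :
    IsCliqueEdgeColoring (diskGraph ρ) (fun v => ⟪u, v⟫) (fun a b => κ (b - a)) := by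
  have hmem : ∀ a b : E, (diskGraph ρ).Adj a b → ⟪u, a⟫ < ⟪u, b⟫ → b - a ∈ halfBall u ρ :=
    fun a b hab hlt => ⟨by rw [← dist_eq_norm, dist_comm]; exact (diskGraph_adj.1 hab).2,
      by rw [inner_sub_right]; linarith⟩
  refine ⟨fun x y z hxy hxz hy hz hcol hyz => diskGraph_adj.2 ⟨hyz, ?_⟩,
    fun x y z hyx hzx hy hz hcol hyz => diskGraph_adj.2 ⟨hyz, ?_⟩⟩
  · simpa only [dist_sub_right] using hκ _ (hmem x y hxy hy) _ (hmem x z hxz hz) hcol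
  · simpa only [dist_sub_left, dist_comm z] using
      hκ _ (hmem y x hyx hy) _ (hmem z x hzx hz) hcol

theorem exists_injOn_isCliqueEdgeColoring [Nonempty ι] {e : E} (he : ‖e‖ = 1) {ρ : ℝ}
    {parts : ι → Set E} (hunion : ⋃ i, parts i = halfBall e ρ)
    (hdiam : ∀ i, Metric.diam (parts i) ≤ ρ) (ξ : Finset E) :
    ∃ (f : E → ℝ) (c : E → E → ι), Set.InjOn f ξ ∧ IsCliqueEdgeColoring (diskGraph ρ) f c := by
  obtain ⟨u, hu⟩ := exists_forall_inner_ne_zero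
    (S := insert e ((fun q : E × E => q.1 - q.2) '' ξ.offDiag))
    ((ξ.offDiag.finite_toSet.image _).insert e) <| by
      rintro (h | ⟨q, hq, h⟩)
      · simp [← h] at he
      · exact (mem_offDiag.1 hq).2.2 (sub_eq_zero.1 h)
  have hu0 : u ≠ 0 := fun h => hu e (Set.mem_insert e _) (by simp [h])
  have hf : Set.InjOn (fun v => ⟪u, v⟫) ξ := fun y hy z hz hyz => by
    by_contra hne
    refine hu (y - z) (Set.mem_insert_of_mem _ ⟨(y, z), mem_offDiag.2 ⟨hy, hz, hne⟩, rfl⟩) ?_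
    rw [real_inner_comm, inner_sub_right, sub_eq_zero]
    exact hyz
  obtain ⟨R, hR⟩ := exists_linearIsometryEquiv_preimage_halfBall he hu0 ρ
  obtain ⟨κ, hκ⟩ := exists_coloring_of_iUnion_eq (parts := fun i => R ⁻¹' parts i)
    (by rw [← Set.preimage_iUnion, hunion, hR])
    (fun i => (R.toIsometryEquiv.diam_preimage _).trans_le (hdiam i))
    (Metric.isBounded_closedBall.subset fun z (hz : z ∈ halfBall u ρ) =>
      mem_closedBall_zero_iff.2 hz.1)
  exact ⟨_, _, hf, isCliqueEdgeColoring_diskGraph hκ⟩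

end Geometry

theorem diskDeg_eq_card_filter_adj {d : ℕ} (ρ : ℝ) (ξ : Finset (EuclideanSpace ℝ (Fin d)))
    (x : EuclideanSpace ℝ (Fin d)) : diskDeg ρ ξ x = #{y ∈ ξ | (diskGraph ρ).Adj x y} := by
  rw [diskDeg]
  congr 1
  ext y
  simp only [mem_filter, diskGraph_adj, ne_comm]

theorem card_upEdges_diskGraph_le {d : ℕ} {ρ : ℝ} {ξ : Finset (EuclideanSpace ℝ (Fin d))}
    {f : EuclideanSpace ℝ (Fin d) → ℝ} :
    #(upEdges (diskGraph ρ) f ξ) ≤ diskN ρ ξ := by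
  refine card_le_card_of_injOn (fun q => {q.1, q.2}) (fun q hq => ?_) fun q hq q' hq' h => ?_
  · simp only [upEdges, coe_filter, mem_product, Set.mem_ofPred_eq, diskGraph_adj] at hq
    obtain ⟨⟨h1, h2⟩, ⟨hne, hdist⟩, -⟩ := hq
    simp only [coe_filter, mem_powersetCard, Set.mem_ofPred_eq]
    refine ⟨⟨insert_subset h1 (singleton_subset_iff.2 h2), card_pair hne⟩, ?_⟩
    simp only [mem_insert, mem_singleton]
    rintro a (rfl | rfl) b (rfl | rfl) hab
    exacts [absurd rfl hab, hdist, dist_comm q.1 q.2 ▸ hdist, absurd rfl hab]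
  · simp only [upEdges, coe_filter, mem_product, Set.mem_ofPred_eq] at hq hq'
    have := congrArg (fun s : Finset _ => (s : Set (EuclideanSpace ℝ (Fin d)))) h
    simp only [coe_pair] at this
    rcases Set.pair_eq_pair_iff.1 this with ⟨h1, h2⟩ | ⟨h1, h2⟩
    · exact Prod.ext h1 h2
    · rw [h1, h2] at hq
      exact absurd hq.2.2 hq'.2.2.asymm

theorem natCast_le_rpow_three_halves (n : ℕ) : (n : ℝ) ≤ (n : ℝ) ^ (3 / 2 : ℝ) := by
  rcases n.eq_zero_or_pos with rfl | hn
  · simp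
  · exact Real.self_le_rpow_of_one_le (by exact_mod_cast hn) (by norm_num)

theorem sum_sq_degrees_bound_general (d : ℕ) (hd : 0 < d) (ρ : ℝ)
    (p : ℕ) (hp : 1 ≤ p)
    (parts : Fin p → Set (EuclideanSpace ℝ (Fin d)))
    (hunion : (⋃ i, parts i) =
      {z : EuclideanSpace ℝ (Fin d) | ‖z‖ ≤ ρ ∧ 0 < z ⟨0, hd⟩})
    (hdiam : ∀ i, Metric.diam (parts i) ≤ ρ)
    (ξ : Finset (EuclideanSpace ℝ (Fin d))) :
    (∑ x ∈ ξ, (diskDeg ρ ξ x : ℝ) ^ 2 ≤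
        (8 * Real.sqrt 2 / 3) * p * (diskN ρ ξ : ℝ) ^ ((3 : ℝ) / 2)
          + 4 * p * (diskN ρ ξ : ℝ)) ∧
    ((8 * Real.sqrt 2 / 3) * p * (diskN ρ ξ : ℝ) ^ ((3 : ℝ) / 2)
          + 4 * p * (diskN ρ ξ : ℝ) ≤
        (8 * Real.sqrt 2 / 3 + 4) * p * (diskN ρ ξ : ℝ) ^ ((3 : ℝ) / 2)) := by
  have : Nonempty (Fin p) := ⟨⟨0, hp⟩⟩
  have hhalf : {z : EuclideanSpace ℝ (Fin d) | ‖z‖ ≤ ρ ∧ 0 < z ⟨0, hd⟩} =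
      halfBall (EuclideanSpace.single ⟨0, hd⟩ 1) ρ := by
    ext z
    simp [halfBall, EuclideanSpace.inner_single_left]
  obtain ⟨f, c, hf, hc⟩ := exists_injOn_isCliqueEdgeColoring (by simp) (hunion.trans hhalf)
    hdiam ξ
  refine ⟨?_, ?_⟩
  · simpa only [diskDeg_eq_card_filter_adj, Fintype.card_fin] using
      sum_sq_card_filter_adj_le_rpow hf hc (by exact_mod_cast card_upEdges_diskGraph_le)
  · have := mul_le_mul_of_nonneg_left (natCast_le_rpow_three_halves (diskN ρ ξ))
      (by positivity : (0 : ℝ) ≤ 4 * p)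
    linarith

/-- Corollary 6.3: if the half ball `B = {z : ‖z‖ ≤ ρ, z₁ > 0}` can be partitioned into `p`
sets of diameter at most `ρ`, then
`Σ_{x∈ξ} deg(x)² ≤ (8√2/3)·p·N_ξ^(3/2) + 4·p·N_ξ ≤ (8√2/3 + 4)·p·N_ξ^(3/2)`. -/
theorem sum_sq_degrees_bound (d : ℕ) (hd : 0 < d) (ρ : ℝ) (hρ : 0 < ρ)
    (p : ℕ) (hp : 1 ≤ p)
    (parts : Fin p → Set (EuclideanSpace ℝ (Fin d)))
    (hdisj : Pairwise (Function.onFun Disjoint parts))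
    (hunion : (⋃ i, parts i) =
      {z : EuclideanSpace ℝ (Fin d) | ‖z‖ ≤ ρ ∧ 0 < z ⟨0, hd⟩})
    (hdiam : ∀ i, Metric.diam (parts i) ≤ ρ)
    (ξ : Finset (EuclideanSpace ℝ (Fin d))) :
    (∑ x ∈ ξ, (diskDeg ρ ξ x : ℝ) ^ 2 ≤
        (8 * Real.sqrt 2 / 3) * p * (diskN ρ ξ : ℝ) ^ ((3 : ℝ) / 2)
          + 4 * p * (diskN ρ ξ : ℝ)) ∧
    ((8 * Real.sqrt 2 / 3) * p * (diskN ρ ξ : ℝ) ^ ((3 : ℝ) / 2)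
          + 4 * p * (diskN ρ ξ : ℝ) ≤
        (8 * Real.sqrt 2 / 3 + 4) * p * (diskN ρ ξ : ℝ) ^ ((3 : ℝ) / 2)) :=
  sum_sq_degrees_bound_general d hd ρ p hp parts hunion hdiam ξ
end

section
/- For every finite simple graph with N edges, the sum over all vertices v of deg(v)² is at most N² + N; that is, among all graphs with N edges the star (one vertex of degree N, all other non-isolated vertices of degree 1) maximises the sum of squared degrees. -/
/-!
Two adjacent vertices `u, v` have at most `N + 1` incident edges between them, counting the
edge `uv` twice, so `deg u + deg v ≤ N + 1`. Summing this over the `2N` darts `(u, v)` gives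
`∑ (deg u + deg v) = 2 ∑_v deg v ^ 2` on the left and `2N (N + 1)` on the right.
-/

open Finset

namespace SimpleGraph

variable {V : Type*} [Fintype V] (G : SimpleGraph V) [DecidableRel G.Adj]

theorem degree_add_degree_le_of_adj {u v : V} (h : G.Adj u v) :
    G.degree u + G.degree v ≤ #G.edgeFinset + 1 := by
  classical
  have hunion : G.incidenceFinset u ∪ G.incidenceFinset v ⊆ G.edgeFinset :=
    union_subset (G.incidenceFinset_subset u) (G.incidenceFinset_subset v)
  have hinter : G.incidenceFinset u ∩ G.incidenceFinset v = {s(u, v)} :=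
    coe_injective (by push_cast; exact G.incidenceSet_inter_incidenceSet_of_adj h)
  rw [← card_incidenceFinset_eq_degree, ← card_incidenceFinset_eq_degree,
    ← card_union_add_card_inter, hinter, card_singleton]
  exact Nat.add_le_add_right (card_le_card hunion) 1

theorem sum_dart_fst {M : Type*} [AddCommMonoid M] (f : V → M) :
    ∑ d : G.Dart, f d.fst = ∑ v, G.degree v • f v := by
  classical
  rw [← sum_fiberwise univ (fun d : G.Dart ↦ d.fst)]
  refine sum_congr rfl fun v _ ↦ ?_
  rw [sum_congr rfl fun d hd ↦ by rw [(mem_filter.1 hd).2], sum_const]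
  congr 1
  convert G.dart_fst_fiber_card_eq_degree v

theorem sum_dart_snd {M : Type*} [AddCommMonoid M] (f : V → M) :
    ∑ d : G.Dart, f d.snd = ∑ d : G.Dart, f d.fst :=
  Fintype.sum_equiv Dart.symm_involutive.toPerm _ _ fun _ ↦ rfl

theorem sum_degree_sq_eq_sum_dart :
    ∑ v, G.degree v ^ 2 = ∑ d : G.Dart, G.degree d.fst := by
  rw [G.sum_dart_fst fun v ↦ G.degree v]
  simp only [smul_eq_mul, sq]

end SimpleGraph

open SimpleGraph in
theorem sum_sq_degrees_le_star_general {V : Type*} [Fintype V]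
    (G : SimpleGraph V) [DecidableRel G.Adj] :
    ∑ v, G.degree v ^ 2 ≤ G.edgeFinset.card ^ 2 + G.edgeFinset.card := by
  set N := #G.edgeFinset
  suffices 2 * ∑ v, G.degree v ^ 2 ≤ 2 * (N ^ 2 + N) by omega
  calc 2 * ∑ v, G.degree v ^ 2
      = ∑ d : G.Dart, (G.degree d.fst + G.degree d.snd) := by
        rw [sum_add_distrib, G.sum_dart_snd fun v ↦ G.degree v, sum_degree_sq_eq_sum_dart,
          two_mul]
    _ ≤ ∑ _d : G.Dart, (N + 1) := sum_le_sum fun d _ ↦ G.degree_add_degree_le_of_adj d.adj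
    _ = 2 * (N ^ 2 + N) := by
        rw [sum_const, card_univ, dart_card_eq_twice_card_edges, smul_eq_mul]; ring

/-- For every finite simple graph with `N` edges, the sum of the squared degrees is
at most `N² + N` (the star maximises the sum of squared degrees). -/
theorem sum_sq_degrees_le_star {V : Type*} [Fintype V] [DecidableEq V]
    (G : SimpleGraph V) [DecidableRel G.Adj] :
    ∑ v, G.degree v ^ 2 ≤ G.edgeFinset.card ^ 2 + G.edgeFinset.card :=
  sum_sq_degrees_le_star_general G
end

section
/- Let μ be a Borel measure on ℝ^d that is finite on compact sets, and let ρ > 0. If ∫_{ℝ^d} μ(B(x,ρ)) dμ(x) < ∞, then the function x ↦ μ(B(x,ρ)) is bounded on ℝ^d, i.e. sup_{x ∈ ℝ^d} μ(B(x,ρ)) < ∞. -/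
/-!
If `a = μ(B(z, ρ/2))`, then every `x ∈ B(z, ρ/2)` satisfies `B(z, ρ/2) ⊆ B(x, ρ)`, so
`a² ≤ ∫ μ(B(x, ρ)) dμ(x)`. Hence the measures of all balls of radius `ρ/2` are bounded by a
single constant. By compactness of `B(0, ρ)` and translation, every ball of radius `ρ` is covered
by the same finite number of balls of radius `ρ/2`, which bounds `μ(B(x, ρ))` uniformly.
-/

open MeasureTheory Metric

theorem ENNReal.le_max_one_of_mul_self_le {a b : ENNReal} (h : a * a ≤ b) : a ≤ max 1 b := by
  rcases le_or_gt a 1 with ha | ha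
  · exact ha.trans (le_max_left _ _)
  · calc a = a * 1 := (mul_one a).symm
      _ ≤ a * a := mul_le_mul_right ha.le a
      _ ≤ b := h
      _ ≤ max 1 b := le_max_right _ _

theorem measure_closedBall_mul_self_le_lintegral {X : Type*} [PseudoMetricSpace X]
    [MeasurableSpace X] [OpensMeasurableSpace X] (μ : Measure X) (z : X) (r : ℝ) :
    μ (closedBall z r) * μ (closedBall z r) ≤ ∫⁻ x, μ (closedBall x (r + r)) ∂μ :=
  calc μ (closedBall z r) * μ (closedBall z r)
      = ∫⁻ _ in closedBall z r, μ (closedBall z r) ∂μ := (setLIntegral_const _ _).symm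
    _ ≤ ∫⁻ x in closedBall z r, μ (closedBall x (r + r)) ∂μ :=
        setLIntegral_mono' measurableSet_closedBall fun x hx =>
          measure_mono <| closedBall_subset_closedBall' <| by
            rw [dist_comm]; linarith [mem_closedBall.1 hx]
    _ ≤ ∫⁻ x, μ (closedBall x (r + r)) ∂μ := setLIntegral_le_lintegral _ _

theorem exists_finset_closedBall_subset_biUnion_closedBall_add {E : Type*}
    [SeminormedAddCommGroup E] [ProperSpace E] (r : ℝ) {s : ℝ} (hs : 0 < s) :
    ∃ t : Finset E, ∀ x, closedBall x r ⊆ ⋃ y ∈ t, closedBall (x + y) s := by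
  obtain ⟨t, -, ht_fin, hcover⟩ :=
    finite_cover_balls_of_compact (isCompact_closedBall (0 : E) r) hs
  refine ⟨ht_fin.toFinset, fun x z hz => ?_⟩
  have hz0 : z - x ∈ closedBall (0 : E) r := by
    rwa [mem_closedBall, dist_zero_right, ← dist_eq_norm]
  obtain ⟨y, hy, hzy⟩ := Set.mem_iUnion₂.1 (hcover hz0)
  refine Set.mem_iUnion₂.2 ⟨y, ht_fin.mem_toFinset.2 hy, ?_⟩
  rw [mem_closedBall, dist_eq_norm, ← sub_sub, ← dist_eq_norm]
  exact (mem_ball.1 hzy).le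

theorem iSup_measure_closedBall_lt_top {E : Type*} [SeminormedAddCommGroup E] [ProperSpace E]
    [MeasurableSpace E] (μ : Measure E) (r : ℝ) {s : ℝ} (hs : 0 < s) {C : ENNReal}
    (hC : C < ⊤) (hbound : ∀ z, μ (closedBall z s) ≤ C) :
    ⨆ x, μ (closedBall x r) < ⊤ := by
  obtain ⟨t, ht⟩ := exists_finset_closedBall_subset_biUnion_closedBall_add (E := E) r hs
  have hball : ∀ x, μ (closedBall x r) ≤ t.card * C := fun x =>
    calc μ (closedBall x r) ≤ μ (⋃ y ∈ t, closedBall (x + y) s) := measure_mono (ht x)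
      _ ≤ ∑ y ∈ t, μ (closedBall (x + y) s) := measure_biUnion_finset_le t _
      _ ≤ ∑ _y ∈ t, C := Finset.sum_le_sum fun y _ => hbound (x + y)
      _ = t.card * C := by rw [Finset.sum_const, nsmul_eq_mul]
  exact (iSup_le hball).trans_lt (ENNReal.mul_lt_top (ENNReal.natCast_lt_top _) hC)

theorem ball_measure_bounded_general (d : ℕ) (μ : Measure (EuclideanSpace ℝ (Fin d)))
    (ρ : ℝ) (hρ : 0 < ρ)
    (h : ∫⁻ x, μ (Metric.closedBall x ρ) ∂μ < ⊤) :
    ⨆ x, μ (Metric.closedBall x ρ) < ⊤ := by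
  set I := ∫⁻ x, μ (closedBall x ρ) ∂μ
  have hhalf : ∀ z, μ (closedBall z (ρ / 2)) ≤ max 1 I := fun z =>
    ENNReal.le_max_one_of_mul_self_le <| by
      simpa only [add_halves] using measure_closedBall_mul_self_le_lintegral μ z (ρ / 2)
  exact iSup_measure_closedBall_lt_top μ ρ (half_pos hρ)
    (max_lt ENNReal.one_lt_top h) hhalf

/-- If `μ` is a Borel measure on `ℝ^d` that is finite on compact sets and
`∫ μ(B(x,ρ)) dμ(x) < ∞`, then `x ↦ μ(B(x,ρ))` is bounded on `ℝ^d`. -/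
theorem ball_measure_bounded (d : ℕ) (μ : Measure (EuclideanSpace ℝ (Fin d)))
    [IsFiniteMeasureOnCompacts μ] (ρ : ℝ) (hρ : 0 < ρ)
    (h : ∫⁻ x, μ (Metric.closedBall x ρ) ∂μ < ⊤) :
    ⨆ x, μ (Metric.closedBall x ρ) < ⊤ :=
  ball_measure_bounded_general d μ ρ hρ h
end

section
/- Let F be an integrable real random variable and V a nonnegative random variable on a probability space. Let β ∈ ℝ, let λ > 0 be such that E[exp(λF)] < ∞, and let θ > 0 satisfy Φ_β(λ)·θ < 1 and E[exp(λV/θ)] < ∞. Assume that for every u ∈ (0, λ], Ent(exp(uF)) ≤ u·Φ_β(u)·E[V·exp(uF)]. Then log E[exp(λ(F − E F))] ≤ (Ψ_β(λ)·θ / (1 − Φ_β(λ)·θ)) · log E[exp(λV/θ)]. -/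
open MeasureTheory

/-- Entropy of a (nonnegative) random variable: `Ent(Z) = E[Z log Z] − E[Z] log E[Z]`. -/
noncomputable def Ent {Ω : Type*} [MeasurableSpace Ω] (P : Measure Ω) (Z : Ω → ℝ) : ℝ :=
  (∫ ω, Z ω * Real.log (Z ω) ∂P) - (∫ ω, Z ω ∂P) * Real.log (∫ ω, Z ω ∂P)

/-- `φ(z) = e^z − z − 1`. -/
noncomputable def phiFn (z : ℝ) : ℝ := Real.exp z - z - 1

/-- `ψ(z) = z·e^z − e^z + 1`. -/
noncomputable def psiFn (z : ℝ) : ℝ := z * Real.exp z - Real.exp z + 1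

/-- `Φ_β(z)`. -/
noncomputable def PhiFn (β z : ℝ) : ℝ :=
  if 0 < β then psiFn (z * β) / (z * β ^ 2)
  else if β = 0 then z / 2
  else phiFn (-(z * β)) / (z * β ^ 2)

/-- `Ψ_β(z)`. -/
noncomputable def PsiFn (β z : ℝ) : ℝ :=
  if 0 < β then phiFn (z * β) / (z * β ^ 2)
  else if β = 0 then z / 2
  else phiFn (-(z * β)) / (z * β ^ 2)

/-! Herbst's argument. For `G(u) = E e^{uF}` one has
`Ent(e^{uF}) = u² G(u) · (d/du) (log G(u) / u)`. The variational bound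
`E[W Z] ≤ Ent Z + E Z · log E e^W`, applied with `W = λV/θ` and `Z = e^{uF}`, turns the hypothesis
into `Ent(e^{uF}) ≤ a (Ent(e^{uF}) + G(u) log E e^{λV/θ})` with `a = u Φ_β(u) θ / λ ≤ Φ_β(λ) θ < 1`.
Solving for the entropy gives `(d/du) (log G(u) / u) ≤ k Φ_β(u) / u ≤ k Ψ_β'(u)` with
`k = θ log E e^{λV/θ} / (λ (1 - Φ_β(λ) θ))`, and integrating from `0⁺`, where `log G(u) / u → E F`
and `Ψ_β(u) → 0`, up to `λ` gives the bound. -/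

open Real Set Filter Topology ProbabilityTheory

lemma monotoneOn_Ici_zero_of_hasDerivAt {g g' : ℝ → ℝ} (hg : ∀ z, HasDerivAt g (g' z) z)
    (hg' : ∀ z, 0 < z → 0 ≤ g' z) : MonotoneOn g (Ici 0) :=
  monotoneOn_of_hasDerivWithinAt_nonneg (convex_Ici 0)
    (fun z _ => (hg z).continuousAt.continuousWithinAt) (fun z _ => (hg z).hasDerivWithinAt)
    (fun z hz => hg' z (by simpa using hz))

lemma phiFn_nonneg (z : ℝ) : 0 ≤ phiFn z := by
  have := add_one_le_exp z
  unfold phiFn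
  linarith

lemma psiFn_nonneg (z : ℝ) : 0 ≤ psiFn z := by
  have h : exp z * (-z + 1) ≤ exp z * exp (-z) :=
    mul_le_mul_of_nonneg_left (add_one_le_exp (-z)) (exp_pos z).le
  rw [← exp_add, add_neg_cancel, exp_zero] at h
  unfold psiFn
  linarith

lemma hasDerivAt_phiFn (z : ℝ) : HasDerivAt phiFn (exp z - 1) z :=
  ((hasDerivAt_exp z).sub (hasDerivAt_id z)).sub_const 1

lemma hasDerivAt_psiFn (z : ℝ) : HasDerivAt psiFn (z * exp z) z := by
  have h := (((hasDerivAt_id' z).mul (hasDerivAt_exp z)).sub (hasDerivAt_exp z)).add_const 1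
  exact h.congr_deriv (by ring)

lemma phiFn_monotoneOn : MonotoneOn phiFn (Ici 0) :=
  monotoneOn_Ici_zero_of_hasDerivAt hasDerivAt_phiFn fun z hz => by
    linarith [add_one_le_exp z]

lemma psiFn_monotoneOn : MonotoneOn psiFn (Ici 0) :=
  monotoneOn_Ici_zero_of_hasDerivAt hasDerivAt_psiFn fun z hz => by positivity

lemma phiFn_le_psiFn {z : ℝ} (hz : 0 ≤ z) : phiFn z ≤ psiFn z := by
  have hmono : MonotoneOn (fun z => psiFn z - phiFn z) (Ici 0) :=
    monotoneOn_Ici_zero_of_hasDerivAt (fun z => (hasDerivAt_psiFn z).sub (hasDerivAt_phiFn z))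
      fun z _ => by have := psiFn_nonneg z; unfold psiFn at this; linarith
  have := hmono self_mem_Ici hz hz
  simp only [psiFn, phiFn, exp_zero] at this ⊢
  linarith

lemma PhiFn_nonneg (β : ℝ) {u : ℝ} (hu : 0 < u) : 0 ≤ PhiFn β u := by
  unfold PhiFn
  split_ifs
  · exact div_nonneg (psiFn_nonneg _) (by positivity)
  · positivity
  · exact div_nonneg (phiFn_nonneg _) (by positivity)

lemma mul_PhiFn_le_mul_PhiFn (β : ℝ) {u v : ℝ} (hu : 0 < u) (huv : u ≤ v) :
    u * PhiFn β u ≤ v * PhiFn β v := by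
  have hv : 0 < v := hu.trans_le huv
  have cancel : ∀ {w : ℝ}, 0 < w → ∀ a, w * (a / (w * β ^ 2)) = a / β ^ 2 := fun hw a => by
    rw [mul_div_assoc', mul_div_mul_left _ _ hw.ne']
  unfold PhiFn
  split_ifs with hpos hzero
  · rw [cancel hu, cancel hv]
    gcongr
    exact psiFn_monotoneOn (mem_Ici.2 (by positivity)) (mem_Ici.2 (by positivity)) (by gcongr)
  · nlinarith
  · have hneg : β < 0 := lt_of_le_of_ne (not_lt.1 hpos) hzero
    rw [cancel hu, cancel hv]
    gcongr
    exact phiFn_monotoneOn (mem_Ici.2 (by nlinarith)) (mem_Ici.2 (by nlinarith)) (by nlinarith)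

lemma PsiFn_zero_left : PsiFn 0 = fun u => u / 2 := by
  funext u
  simp [PsiFn]

lemma PsiFn_of_ne_zero {β : ℝ} (hβ : β ≠ 0) :
    PsiFn β = fun u => phiFn (u * |β|) / (u * β ^ 2) := by
  funext u
  rcases hβ.lt_or_gt with hneg | hpos
  · simp [PsiFn, hneg.not_gt, hβ, abs_of_neg hneg]
  · simp [PsiFn, hpos, abs_of_pos hpos]

lemma hasDerivAt_PsiFn {β u : ℝ} (hβ : β ≠ 0) (hu : u ≠ 0) :
    HasDerivAt (PsiFn β) (psiFn (u * |β|) / (u ^ 2 * β ^ 2)) u := by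
  rw [PsiFn_of_ne_zero hβ]
  have h := ((hasDerivAt_phiFn (u * |β|)).comp u (hasDerivAt_mul_const |β|)).div
    (hasDerivAt_mul_const (β ^ 2)) (by positivity)
  refine h.congr_deriv ?_
  rw [← sq_abs β]
  field_simp
  simp only [Function.comp, phiFn, psiFn]
  ring_nf

lemma differentiableOn_PsiFn (β : ℝ) : DifferentiableOn ℝ (PsiFn β) (Ioi 0) := by
  intro u hu
  rcases eq_or_ne β 0 with rfl | hβ
  · rw [PsiFn_zero_left]
    fun_prop
  · exact (hasDerivAt_PsiFn hβ (ne_of_gt hu)).differentiableAt.differentiableWithinAt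

lemma PhiFn_div_le_deriv_PsiFn (β : ℝ) {u : ℝ} (hu : 0 < u) :
    PhiFn β u / u ≤ deriv (PsiFn β) u := by
  rcases eq_or_ne β 0 with rfl | hβ
  · rw [PsiFn_zero_left, deriv_div_const, deriv_id'']
    simp only [PhiFn, lt_irrefl, if_false, if_true]
    exact le_of_eq (by field_simp)
  rw [(hasDerivAt_PsiFn hβ hu.ne').deriv]
  rcases hβ.lt_or_gt with hneg | hpos
  · rw [PhiFn, if_neg hneg.not_gt, if_neg hβ, abs_of_neg hneg, show -(u * β) = u * -β by ring,
      div_div, show u * β ^ 2 * u = u ^ 2 * β ^ 2 by ring]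
    gcongr
    exact phiFn_le_psiFn (by nlinarith)
  · rw [PhiFn, if_pos hpos, abs_of_pos hpos, div_div, show u * β ^ 2 * u = u ^ 2 * β ^ 2 by ring]

lemma tendsto_PsiFn_nhdsGT_zero (β : ℝ) : Tendsto (PsiFn β) (𝓝[>] 0) (𝓝 0) := by
  rcases eq_or_ne β 0 with rfl | hβ
  · rw [PsiFn_zero_left]
    exact tendsto_nhdsWithin_of_tendsto_nhds
      (by simpa using (continuous_id.div_const (2 : ℝ)).tendsto 0)
  have hslope := (hasDerivAt_phiFn 0).tendsto_slope_zero_right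
  have hlin : Tendsto (fun u => u * |β|) (𝓝[>] 0) (𝓝[>] 0) :=
    tendsto_nhdsWithin_of_tendsto_nhds_of_eventually_within _
      (by simpa using ((continuous_mul_const |β|).tendsto 0).mono_left nhdsWithin_le_nhds)
      (eventually_nhdsWithin_of_forall fun u hu => by simp only [mem_Ioi] at hu ⊢; positivity)
  have h := (hslope.comp hlin).div_const |β|
  simp only [exp_zero, sub_self, zero_div] at h
  refine h.congr' (eventually_nhdsWithin_of_forall fun u hu => ?_)
  have hu : u ≠ 0 := ne_of_gt hu
  simp only [PsiFn_of_ne_zero hβ, Function.comp, zero_add, smul_eq_mul, phiFn, exp_zero,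
    sub_zero, sub_self]
  rw [← sq_abs β]
  field_simp

lemma exp_mul_le_exp_mul_add_exp_mul {a b t : ℝ} (hat : a ≤ t) (htb : t ≤ b) (x : ℝ) :
    exp (t * x) ≤ exp (a * x) + exp (b * x) := by
  rcases le_total 0 x with hx | hx
  · have := exp_le_exp.2 (mul_le_mul_of_nonneg_right htb hx)
    linarith [exp_pos (a * x)]
  · have := exp_le_exp.2 (mul_le_mul_of_nonpos_right hat hx)
    linarith [exp_pos (b * x)]

lemma exp_mul_sub_one_div_le {t b : ℝ} (ht : 0 < t) (htb : t ≤ b) (x : ℝ) :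
    (exp (t * x) - 1) / t ≤ (exp (b * x) - 1) / b := by
  have hb : 0 < b := ht.trans_le htb
  have h := convexOn_exp.2 (mem_univ (b * x)) (mem_univ 0) (div_nonneg ht.le hb.le)
    (sub_nonneg.2 ((div_le_one hb).2 htb)) (add_sub_cancel _ 1)
  simp only [smul_eq_mul, mul_zero, add_zero, exp_zero, mul_one] at h
  rw [← mul_assoc, div_mul_cancel₀ t hb.ne'] at h
  rw [div_le_div_iff₀ ht hb]
  calc (exp (t * x) - 1) * b ≤ (t / b * exp (b * x) + (1 - t / b) - 1) * b := by gcongr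
    _ = (exp (b * x) - 1) * t := by field_simp; ring

lemma le_div_one_sub_of_le_mul_add {E a p A : ℝ} (h : E ≤ a * (E + A)) (ha : 0 ≤ a)
    (hap : a ≤ p) (hp : p < 1) (hA : 0 ≤ A) : E ≤ a * A / (1 - p) :=
  calc E ≤ a * A / (1 - a) := by rw [le_div_iff₀ (by linarith)]; linarith
    _ ≤ a * A / (1 - p) := div_le_div_of_nonneg_left (mul_nonneg ha hA) (by linarith) (by linarith)

lemma mul_le_mul_log_sub_add_exp (a : ℝ) {y : ℝ} (hy : 0 ≤ y) :
    a * y ≤ y * log y - y + exp a := by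
  rcases hy.eq_or_lt with rfl | hy
  · simp [(exp_pos a).le]
  have h := log_le_sub_one_of_pos (div_pos (exp_pos a) hy)
  rw [log_div (exp_pos a).ne' hy.ne', log_exp, div_sub_one hy.ne', le_div_iff₀ hy] at h
  linarith

section Entropy

variable {Ω : Type*} [MeasurableSpace Ω] {μ : Measure Ω} {Z W : Ω → ℝ}

lemma integrable_mul_of_integrable_exp (hW : ∀ ω, 0 ≤ W ω) (hZ : ∀ ω, 0 ≤ Z ω)
    (hWexp : Integrable (fun ω => exp (W ω)) μ) (hZint : Integrable Z μ)
    (hZlog : Integrable (fun ω => Z ω * log (Z ω)) μ) :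
    Integrable (fun ω => W ω * Z ω) μ := by
  have hWm : AEStronglyMeasurable W μ := by
    simpa using hWexp.1.aemeasurable.log.aestronglyMeasurable
  refine ((hZlog.sub hZint).add hWexp).mono' (hWm.mul hZint.1) (ae_of_all _ fun ω => ?_)
  rw [norm_of_nonneg (mul_nonneg (hW ω) (hZ ω))]
  exact mul_le_mul_log_sub_add_exp (W ω) (hZ ω)

lemma integral_mul_le_Ent_add (hZ : ∀ ω, 0 ≤ Z ω) (hZint : Integrable Z μ)
    (hZpos : 0 < ∫ ω, Z ω ∂μ) (hZlog : Integrable (fun ω => Z ω * log (Z ω)) μ)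
    (hWexp : Integrable (fun ω => exp (W ω)) μ) (hWZ : Integrable (fun ω => W ω * Z ω) μ) :
    ∫ ω, W ω * Z ω ∂μ ≤ Ent μ Z + (∫ ω, Z ω ∂μ) * log (∫ ω, exp (W ω) ∂μ) := by
  have : NeZero μ := ⟨by rintro rfl; simp at hZpos⟩
  set m := ∫ ω, Z ω ∂μ
  set R := ∫ ω, exp (W ω) ∂μ
  have hR : 0 < R := integral_exp_pos hWexp
  -- Young's inequality shifted by `log (R / m)`, the shift that makes it tight
  have hpt : ∀ ω, W ω * Z ω ≤
      Z ω * log (Z ω) - Z ω + log (R / m) * Z ω + m / R * exp (W ω) := by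
    intro ω
    have h := mul_le_mul_log_sub_add_exp (W ω - log (R / m)) (hZ ω)
    rw [exp_sub, exp_log (by positivity), div_div_eq_mul_div, mul_comm, mul_div_assoc] at h
    linarith
  have h1 : Integrable (fun ω => Z ω * log (Z ω) - Z ω + log (R / m) * Z ω) μ :=
    (hZlog.sub hZint).add (hZint.const_mul _)
  have h2 : Integrable (fun ω => m / R * exp (W ω)) μ := hWexp.const_mul _
  calc ∫ ω, W ω * Z ω ∂μ
      ≤ ∫ ω, Z ω * log (Z ω) - Z ω + log (R / m) * Z ω + m / R * exp (W ω) ∂μ :=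
        integral_mono hWZ (h1.add h2) hpt
    _ = (∫ ω, Z ω * log (Z ω) ∂μ) - m + log (R / m) * m + m / R * R := by
        rw [integral_add h1 h2,
          integral_add (by exact hZlog.sub hZint) (by exact hZint.const_mul _),
          integral_sub hZlog hZint, integral_const_mul, integral_const_mul]
    _ = Ent μ Z + m * log R := by
        rw [Ent, log_div hR.ne' hZpos.ne']
        field_simp
        ring

end Entropy

section MGF

variable {Ω : Type*} [MeasurableSpace Ω] {μ : Measure Ω} {X : Ω → ℝ}

lemma continuousOn_mgf_Icc {a b : ℝ} (ha : Integrable (fun ω => exp (a * X ω)) μ)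
    (hb : Integrable (fun ω => exp (b * X ω)) μ) : ContinuousOn (mgf X μ) (Icc a b) :=
  continuousOn_of_dominated (fun t ht => (integrable_exp_mul_of_le_of_le ha hb ht.1 ht.2).1)
    (fun t ht => ae_of_all _ fun ω => by
      rw [norm_of_nonneg (exp_pos _).le]
      exact exp_mul_le_exp_mul_add_exp_mul ht.1 ht.2 (X ω))
    (ha.add hb) (ae_of_all _ fun ω => by fun_prop)

lemma Ent_exp_mul (t : ℝ) :
    Ent μ (fun ω => exp (t * X ω)) =
      t * μ[fun ω => X ω * exp (t * X ω)] - mgf X μ t * cgf X μ t := by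
  simp only [Ent, log_exp, ← integral_const_mul, cgf, mgf]
  congr 2
  funext ω
  ring

variable [IsProbabilityMeasure μ]

lemma Ioo_subset_interior_integrableExpSet {b : ℝ}
    (hb : Integrable (fun ω => exp (b * X ω)) μ) : Ioo 0 b ⊆ interior (integrableExpSet X μ) := by
  rw [← interior_Icc]
  exact interior_mono fun t ht => integrable_exp_mul_of_nonneg_of_le hb ht.1 ht.2

lemma one_le_integral_exp {W : Ω → ℝ} (hW : ∀ ω, 0 ≤ W ω)
    (hWexp : Integrable (fun ω => exp (W ω)) μ) : 1 ≤ ∫ ω, exp (W ω) ∂μ := by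
  simpa using integral_mono (integrable_const 1) hWexp fun ω => one_le_exp (hW ω)

lemma tendsto_mgf_sub_one_div_nhdsGT_zero {b : ℝ} (hb : 0 < b) (hX : Integrable X μ)
    (hexp : Integrable (fun ω => exp (b * X ω)) μ) :
    Tendsto (fun t => (mgf X μ t - 1) / t) (𝓝[>] 0) (𝓝 μ[X]) := by
  have hint : ∀ t ∈ Ioo 0 b, Integrable (fun ω => exp (t * X ω)) μ :=
    fun t ht => integrable_exp_mul_of_nonneg_of_le hexp ht.1.le ht.2.le
  -- the slopes `(exp (t x) - 1) / t` increase in `t` and are bounded below by `x`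
  have hlim := tendsto_integral_filter_of_dominated_convergence
    (F := fun t ω => (exp (t * X ω) - 1) / t) (f := X) (l := 𝓝[>] 0)
    (fun ω => |X ω| + |(exp (b * X ω) - 1) / b|)
    (eventually_nhdsWithin_of_forall fun t _ => by fun_prop)
    (by
      filter_upwards [Ioo_mem_nhdsGT hb] with t ht
      refine ae_of_all _ fun ω => ?_
      have hlow : X ω ≤ (exp (t * X ω) - 1) / t := by
        rw [le_div_iff₀ ht.1]
        linarith [add_one_le_exp (t * X ω)]
      exact (abs_le_max_abs_abs hlow (exp_mul_sub_one_div_le ht.1 ht.2.le (X ω))).trans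
        (max_le_add_of_nonneg (abs_nonneg _) (abs_nonneg _)))
    (hX.abs.add ((hexp.sub (integrable_const 1)).div_const b).abs)
    (ae_of_all _ fun ω => by
      have h := ((hasDerivAt_mul_const (X ω)).exp (x := 0)).tendsto_slope_zero_right
      simpa [div_eq_inv_mul] using h)
  refine hlim.congr' ?_
  filter_upwards [Ioo_mem_nhdsGT hb] with t ht
  rw [integral_div, integral_sub (hint t ht) (integrable_const 1), integral_const, probReal_univ,
    one_smul, mgf]

lemma hasDerivAt_cgf_div {t : ℝ} (ht : t ∈ interior (integrableExpSet X μ)) (ht0 : t ≠ 0) :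
    HasDerivAt (fun s => cgf X μ s / s)
      (Ent μ (fun ω => exp (t * X ω)) / (t ^ 2 * mgf X μ t)) t := by
  have hpos : 0 < mgf X μ t := mgf_pos (integrable_of_mem_integrableExpSet (interior_subset ht))
  refine (((hasDerivAt_mgf ht).log hpos.ne').div (hasDerivAt_id' t) ht0).congr_deriv ?_
  rw [Ent_exp_mul, cgf]
  -- keeps `field_simp` from rewriting inside the integrand
  set I := μ[fun ω => X ω * exp (t * X ω)]
  field_simp

lemma cgf_sub_const {t : ℝ} (ht : Integrable (fun ω => exp (t * X ω)) μ) (c : ℝ) :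
    cgf (fun ω => X ω - c) μ t = cgf X μ t - t * c := by
  have h : mgf (fun ω => X ω - c) μ t = mgf X μ t * exp (-(t * c)) := by
    simpa [sub_eq_add_neg, mul_neg] using mgf_add_const (X := X) (μ := μ) (t := t) (-c)
  rw [cgf, h, log_mul (mgf_pos ht).ne' (exp_pos _).ne', log_exp, cgf, sub_eq_add_neg]

theorem cgf_le_of_Ent_le_deriv {b : ℝ} (hb : 0 < b) (hX : Integrable X μ)
    (hexp : Integrable (fun ω => exp (b * X ω)) μ) {Ψ : ℝ → ℝ}
    (hΨ : DifferentiableOn ℝ Ψ (Ioi 0)) (hΨ0 : Tendsto Ψ (𝓝[>] 0) (𝓝 0))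
    (hle : ∀ t ∈ Ioo 0 b,
      Ent μ (fun ω => exp (t * X ω)) / (t ^ 2 * mgf X μ t) ≤ deriv Ψ t) :
    cgf X μ b ≤ b * μ[X] + b * Ψ b := by
  have hIcc : Icc 0 b ⊆ integrableExpSet X μ :=
    fun t ht => integrable_exp_mul_of_nonneg_of_le hexp ht.1 ht.2
  have hpos : ∀ t ∈ Ioc 0 b, 0 < mgf X μ t :=
    fun t ht => mgf_pos (hIcc (Ioc_subset_Icc_self ht))
  have hanti : AntitoneOn (fun t => cgf X μ t / t - Ψ t) (Ioc 0 b) := by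
    refine antitoneOn_of_hasDerivWithinAt_nonpos (convex_Ioc 0 b) ?_ (fun t ht => ?_)
      (fun t ht => sub_nonpos.2 (hle t (by rwa [interior_Ioc] at ht)))
    · have hmgf := (continuousOn_mgf_Icc (a := 0) (by simp) hexp).mono Ioc_subset_Icc_self
      exact ((hmgf.log fun t ht => (hpos t ht).ne').div continuousOn_id fun t ht => ht.1.ne').sub
        (hΨ.continuousOn.mono Ioc_subset_Ioi_self)
    · rw [interior_Ioc] at ht
      exact ((hasDerivAt_cgf_div (Ioo_subset_interior_integrableExpSet hexp ht) ht.1.ne').sub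
        (hΨ.differentiableAt (Ioi_mem_nhds ht.1)).hasDerivAt).hasDerivWithinAt
  have hbound : ∀ᶠ t in 𝓝[>] 0, cgf X μ b / b - Ψ b ≤ (mgf X μ t - 1) / t - Ψ t := by
    filter_upwards [Ioo_mem_nhdsGT hb] with t ht
    have hKt := hanti ⟨ht.1, ht.2.le⟩ ⟨hb, le_rfl⟩ ht.2.le
    have hlog : cgf X μ t / t ≤ (mgf X μ t - 1) / t :=
      div_le_div_of_nonneg_right (log_le_sub_one_of_pos (hpos t ⟨ht.1, ht.2.le⟩)) ht.1.le
    linarith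
  have hlim := ge_of_tendsto ((tendsto_mgf_sub_one_div_nhdsGT_zero hb hX hexp).sub hΨ0) hbound
  rw [sub_zero, sub_le_iff_le_add, div_le_iff₀ hb] at hlim
  linarith

end MGF

section EntropyMethod

variable {Ω : Type*} [MeasurableSpace Ω] {P : Measure Ω} [IsProbabilityMeasure P] {F V : Ω → ℝ}
  {β lam θ u : ℝ}

lemma Ent_exp_mul_div_le (hu : u ∈ Ioo 0 lam) (hV : ∀ ω, 0 ≤ V ω)
    (hFexp : Integrable (fun ω => exp (lam * F ω)) P) (hθ : 0 < θ) (hΦθ : PhiFn β lam * θ < 1)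
    (hVexp : Integrable (fun ω => exp (lam * V ω / θ)) P)
    (hEnt : Ent P (fun ω => exp (u * F ω)) ≤ u * PhiFn β u * ∫ ω, V ω * exp (u * F ω) ∂P) :
    Ent P (fun ω => exp (u * F ω)) / (u ^ 2 * mgf F P u) ≤
      θ * log (∫ ω, exp (lam * V ω / θ) ∂P) / (lam * (1 - PhiFn β lam * θ)) * (PhiFn β u / u) := by
  have hu' := Ioo_subset_interior_integrableExpSet hFexp hu
  obtain ⟨hu0, hulam⟩ := hu
  have hlam : 0 < lam := hu0.trans hulam
  have hZ : Integrable (fun ω => exp (u * F ω)) P :=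
    integrable_of_mem_integrableExpSet (interior_subset hu')
  have hZlog : Integrable (fun ω => exp (u * F ω) * log (exp (u * F ω))) P := by
    refine ((integrable_pow_mul_exp_of_mem_interior_integrableExpSet hu' 1).const_mul u).congr
      (ae_of_all _ fun ω => ?_)
    simp only [pow_one, log_exp]
    ring
  have hM : 0 < mgf F P u := mgf_pos hZ
  have hR := one_le_integral_exp (fun ω => by have := hV ω; positivity) hVexp
  have hWZ := integrable_mul_of_integrable_exp (W := fun ω => lam * V ω / θ)
    (fun ω => by have := hV ω; positivity) (fun ω => (exp_pos _).le) hVexp hZ hZlog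
  have hdual := integral_mul_le_Ent_add (fun ω => (exp_pos _).le) hZ hM hZlog hVexp hWZ
  have hVZ :
      ∫ ω, lam * V ω / θ * exp (u * F ω) ∂P = lam / θ * ∫ ω, V ω * exp (u * F ω) ∂P := by
    rw [← integral_const_mul]
    congr 1
    funext ω
    ring
  set M := mgf F P u
  set R := ∫ ω, exp (lam * V ω / θ) ∂P
  set E := Ent P (fun ω => exp (u * F ω))
  have ha : 0 ≤ u * PhiFn β u * θ / lam := by have := PhiFn_nonneg β hu0; positivity
  have hself : E ≤ u * PhiFn β u * θ / lam * (E + M * log R) :=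
    calc E ≤ u * PhiFn β u * ∫ ω, V ω * exp (u * F ω) ∂P := hEnt
      _ = u * PhiFn β u * θ / lam * (lam / θ * ∫ ω, V ω * exp (u * F ω) ∂P) := by field_simp
      _ ≤ u * PhiFn β u * θ / lam * (E + M * log R) := by
        gcongr
        rw [← hVZ]
        exact hdual
  have hap : u * PhiFn β u * θ / lam ≤ PhiFn β lam * θ := by
    rw [div_le_iff₀ hlam]
    nlinarith [mul_PhiFn_le_mul_PhiFn β hu0 hulam.le]
  have hE := le_div_one_sub_of_le_mul_add hself ha hap hΦθ (mul_nonneg hM.le (log_nonneg hR))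
  have hp : 0 < 1 - PhiFn β lam * θ := by linarith
  rw [div_le_iff₀ (by positivity)]
  refine hE.trans_eq ?_
  field_simp

end EntropyMethod

/-- Theorem 3.2 (entropy inequality ⇒ moment generating function bound): if
`Ent(e^{uF}) ≤ u·Φ_β(u)·E[V e^{uF}]` for all `u ∈ (0, λ]`, then
`log E[e^{λ(F − EF)}] ≤ (Ψ_β(λ)·θ / (1 − Φ_β(λ)·θ)) · log E[e^{λV/θ}]`. -/
theorem entropy_method_mgf_bound {Ω : Type*} [MeasurableSpace Ω]
    (P : Measure Ω) [IsProbabilityMeasure P]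
    (F V : Ω → ℝ) (hF : Integrable F P) (hV : ∀ ω, 0 ≤ V ω)
    (β lam θ : ℝ) (hlam : 0 < lam)
    (hFexp : Integrable (fun ω => Real.exp (lam * F ω)) P)
    (hθ : 0 < θ) (hΦθ : PhiFn β lam * θ < 1)
    (hVexp : Integrable (fun ω => Real.exp (lam * V ω / θ)) P)
    (hEnt : ∀ u : ℝ, 0 < u → u ≤ lam →
      Ent P (fun ω => Real.exp (u * F ω)) ≤
        u * PhiFn β u * ∫ ω, V ω * Real.exp (u * F ω) ∂P) :
    Real.log (∫ ω, Real.exp (lam * (F ω - ∫ ω', F ω' ∂P)) ∂P) ≤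
      PsiFn β lam * θ / (1 - PhiFn β lam * θ) *
        Real.log (∫ ω, Real.exp (lam * V ω / θ) ∂P) := by
  set k := θ * log (∫ ω, exp (lam * V ω / θ) ∂P) / (lam * (1 - PhiFn β lam * θ)) with hk_def
  have hp : 0 < 1 - PhiFn β lam * θ := by linarith
  have hk : 0 ≤ k := by
    have := log_nonneg (one_le_integral_exp (fun ω => by have := hV ω; positivity) hVexp)
    positivity
  have hherbst := cgf_le_of_Ent_le_deriv hlam hF hFexp ((differentiableOn_PsiFn β).const_mul k)
    (by simpa using (tendsto_PsiFn_nhdsGT_zero β).const_mul k) fun u hu => by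
      rw [deriv_const_mul _ ((differentiableOn_PsiFn β).differentiableAt (Ioi_mem_nhds hu.1))]
      exact (Ent_exp_mul_div_le hu hV hFexp hθ hΦθ hVexp (hEnt u hu.1 hu.2.le)).trans
        (mul_le_mul_of_nonneg_left (PhiFn_div_le_deriv_PsiFn β hu.1) hk)
  change cgf (fun ω => F ω - ∫ ω', F ω' ∂P) P lam ≤ _
  rw [cgf_sub_const hFexp]
  have hk_lam : lam * (k * PsiFn β lam) =
      PsiFn β lam * θ / (1 - PhiFn β lam * θ) * log (∫ ω, exp (lam * V ω / θ) ∂P) := by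
    rw [hk_def]
    field_simp
  linarith
end

section
/- Let X be a set, ξ ⊂ X a finite subset, J a nonempty finite index set, and for each j ∈ J let f_j : X → ℝ satisfy 0 ≤ f_j(x) ≤ 1 for all x. For a finite subset A ⊆ X define G(A) = max_{j ∈ J} Σ_{x ∈ A} f_j(x), and for n ∈ ℕ define G_n(A) = min(G(A), n). Then Σ_{x ∈ ξ} (G_n(ξ) − G_n(ξ \ {x})) ≤ G_n(ξ). -/
/-- `G(A) = max_{j ∈ J} Σ_{x ∈ A} f_j(x)` for a nonempty finite index type `J`. -/
noncomputable def supSum {X ι : Type*} [Fintype ι] [Nonempty ι]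
    (f : ι → X → ℝ) (A : Finset X) : ℝ :=
  Finset.univ.sup' Finset.univ_nonempty fun j => ∑ x ∈ A, f j x

/-- `G_n(A) = min(G(A), n)`. -/
noncomputable def supSumTrunc {X ι : Type*} [Fintype ι] [Nonempty ι]
    (f : ι → X → ℝ) (n : ℕ) (A : Finset X) : ℝ :=
  min (supSum f A) (n : ℝ)

/-!
Let `j` attain the maximum in `G(ξ)` and put `a = G(ξ) = Σ_{x ∈ ξ} f_j(x)`. Removing `x` lowers `G`
by at most `f_j(x)`, so as `t ↦ min(t, n)` is monotone each add-one cost is at most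
`h(a) - h(a - f_j(x))` with `h(t) = min(t, n)`. For a concave `h` with `h(0) ≥ 0`, the chord slope
over `[a - c, a]` is at most that over `[0, a]`, so `h(a) - h(a - c) ≤ (c / a) h(a)`; summing over
`x` with `Σ f_j(x) = a` gives the bound `h(a) = G_n(ξ)`.
-/

open Finset Set

theorem ConcaveOn.mul_map_le_mul_map {h : ℝ → ℝ} (hh : ConcaveOn ℝ (Ici 0) h) (h0 : 0 ≤ h 0)
    {a b : ℝ} (hb : 0 ≤ b) (hba : b ≤ a) : b * h a ≤ a * h b := by
  rcases hba.eq_or_lt with rfl | hlt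
  · rfl
  have ha : 0 < a := hb.trans_lt hlt
  -- `b = (1 - b / a) • 0 + (b / a) • a`
  have hconc := hh.2 self_mem_Ici ha.le (div_nonneg (sub_nonneg.2 hba) ha.le)
    (div_nonneg hb ha.le) (by field_simp; ring)
  simp only [smul_eq_mul, mul_zero, zero_add] at hconc
  rw [div_mul_cancel₀ b ha.ne'] at hconc
  calc b * h a ≤ a * ((a - b) / a * h 0 + b / a * h a) := by
        field_simp; nlinarith [mul_nonneg (sub_nonneg.2 hba) h0]
    _ ≤ a * h b := by gcongr

theorem ConcaveOn.sum_map_sub_map_sub_le {α : Type*} {s : Finset α} {c : α → ℝ}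
    (hc : ∀ x ∈ s, 0 ≤ c x) {h : ℝ → ℝ} (hh : ConcaveOn ℝ (Ici 0) h) (h0 : 0 ≤ h 0) :
    ∑ x ∈ s, (h (∑ y ∈ s, c y) - h (∑ y ∈ s, c y - c x)) ≤ h (∑ y ∈ s, c y) := by
  set a := ∑ y ∈ s, c y
  have hca : ∀ x ∈ s, c x ≤ a := fun x hx => single_le_sum hc hx
  rcases (sum_nonneg hc).eq_or_lt with ha | ha
  · have hc0 : ∀ x ∈ s, c x = 0 := (sum_eq_zero_iff_of_nonneg hc).1 ha.symm
    rw [sum_eq_zero fun x hx => by rw [hc0 x hx, sub_zero, sub_self]]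
    simpa [a, ← ha] using h0
  refine le_of_mul_le_mul_left ?_ ha
  calc a * ∑ x ∈ s, (h a - h (a - c x)) ≤ ∑ x ∈ s, c x * h a := by
        rw [mul_sum]
        refine sum_le_sum fun x hx => ?_
        have := hh.mul_map_le_mul_map h0 (sub_nonneg.2 (hca x hx)) (sub_le_self _ (hc x hx))
        linarith
    _ = a * h a := by rw [← sum_mul]

section supSum

variable {X ι : Type*} [Fintype ι] [Nonempty ι] (f : ι → X → ℝ)

theorem exists_supSum_eq_sum (A : Finset X) : ∃ j, supSum f A = ∑ x ∈ A, f j x := by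
  obtain ⟨j, -, hj⟩ := exists_mem_eq_sup' univ_nonempty fun j => ∑ x ∈ A, f j x
  exact ⟨j, hj⟩

theorem sum_le_supSum (A : Finset X) (j : ι) : ∑ x ∈ A, f j x ≤ supSum f A :=
  le_sup' (fun j => ∑ x ∈ A, f j x) (mem_univ j)

theorem sum_sub_le_supSum_erase [DecidableEq X] {A : Finset X} {x : X} (hx : x ∈ A) (j : ι) :
    ∑ y ∈ A, f j y - f j x ≤ supSum f (A.erase x) := by
  rw [← sum_erase_add A _ hx, add_sub_cancel_right]
  exact sum_le_supSum f _ j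

end supSum

/-- Key deterministic add-one-cost estimate from Theorem 7.1: if `0 ≤ f_j ≤ 1` for
all `j`, then `Σ_{x ∈ ξ} (G_n(ξ) − G_n(ξ \ {x})) ≤ G_n(ξ)`. -/
theorem add_one_cost_sum_le {X : Type*} [DecidableEq X] {ι : Type*}
    [Fintype ι] [Nonempty ι]
    (f : ι → X → ℝ) (hf : ∀ j x, 0 ≤ f j x ∧ f j x ≤ 1)
    (ξ : Finset X) (n : ℕ) :
    ∑ x ∈ ξ, (supSumTrunc f n ξ - supSumTrunc f n (ξ.erase x)) ≤
      supSumTrunc f n ξ := by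
  obtain ⟨j, hj⟩ := exists_supSum_eq_sum f ξ
  set a := ∑ x ∈ ξ, f j x
  set h : ℝ → ℝ := fun t => min t n
  have h_concave : ConcaveOn ℝ (Ici 0) h :=
    (concaveOn_id (convex_Ici 0)).inf (concaveOn_const _ (convex_Ici 0))
  have h_mono : Monotone h := fun _ _ hst => min_le_min_right _ hst
  have h_trunc : ∀ A, supSumTrunc f n A = h (supSum f A) := fun _ => rfl
  calc ∑ x ∈ ξ, (supSumTrunc f n ξ - supSumTrunc f n (ξ.erase x))
      ≤ ∑ x ∈ ξ, (h a - h (a - f j x)) := by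
        refine sum_le_sum fun x hx => ?_
        rw [h_trunc, h_trunc, hj]
        linarith [h_mono (sum_sub_le_supSum_erase f hx j)]
    _ ≤ h a := h_concave.sum_map_sub_map_sub_le (fun x _ => (hf j x).1) (by simp [h])
    _ = supSumTrunc f n ξ := by rw [h_trunc, hj]
end

section
/- Let X be a set, ξ : X → ℕ finitely supported, and A a nonempty set of finitely supported functions X → ℕ. Call a function w from the finitely supported functions X → ℕ to [0,1], with finite support contained in A and total mass Σ_ν w(ν) = 1, a finitely supported probability weight on A. Then d_T(ξ, A) = sup_{u : Σ_x ξ(x)·u(x)² ≤ 1} inf_{w} Σ_{x ∈ supp ξ} u(x)·(Σ_ν w(ν)·max(ξ(x) − ν(x), 0)) = inf_{w} sup_{u : Σ_x ξ(x)·u(x)² ≤ 1} Σ_{x ∈ supp ξ} u(x)·(Σ_ν w(ν)·max(ξ(x) − ν(x), 0)), where w ranges over finitely supported probability weights on A and u over functions X → ℝ. -/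
/-!
For fixed `u`, the inner infimum over `ν ∈ A` does not change when `ν` is replaced by a
probability mixture `w` of points of `A`: a mixture is never below the best point in its support.
The substitution `v x = √(ξ x) · u x` turns the constraint into `‖v‖ ≤ 1` in `ℓ²(supp ξ)` and
the objective into `⟪v, c_w⟫` with `c_w x = (√(ξ x))⁻¹ · ∑ ν, w ν · (ξ x − ν x)₊`, which is linear
in `w`, so the `c_w` form a convex set `C`. The supremum of `⟪v, c⟫` over the unit ball is `‖c‖`,
and `sup_v inf_{c ∈ C} ⟪v, c⟫ = inf_{c ∈ C} ‖c‖`: the point `p` of `closure C` nearest to the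
origin satisfies `‖p‖² ≤ ⟪p, c⟫` on `C`, so `v = p / ‖p‖` attains the bound.
-/

/-- The convex distance of a finite point configuration `ξ` (a finitely supported
function `X → ℕ`) to a set `A` of configurations:
`d_T(ξ, A) = sup_{‖u‖_ξ ≤ 1} inf_{ν ∈ A} Σ_{x ∈ supp ξ} u(x)·(ξ(x) − ν(x))₊`. -/
noncomputable def convexDist {X : Type*} (ξ : X →₀ ℕ) (A : Set (X →₀ ℕ)) : ℝ :=
  sSup {r : ℝ | ∃ u : X → ℝ,
    (∑ x ∈ ξ.support, (ξ x : ℝ) * u x ^ 2) ≤ 1 ∧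
    r = sInf {s : ℝ | ∃ ν ∈ A,
      s = ∑ x ∈ ξ.support, u x * max ((ξ x : ℝ) - (ν x : ℝ)) 0}}

/-- A finitely supported probability weight on `A`: a `[0,1]`-valued finitely
supported function on configurations, with support contained in `A` and total
mass `1`. -/
def IsProbWeight {X : Type*} (A : Set (X →₀ ℕ)) (w : (X →₀ ℕ) →₀ ℝ) : Prop :=
  (∀ ν, 0 ≤ w ν) ∧ (∀ ν, w ν ≤ 1) ∧ (↑w.support ⊆ A) ∧ (∑ ν ∈ w.support, w ν = 1)

open scoped RealInnerProductSpace

section InnerProductSpace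

variable {E : Type*} [NormedAddCommGroup E]

theorem sInf_norm_le_norm_of_mem_closure {C : Set E} {p : E} (hp : p ∈ closure C) :
    sInf {r : ℝ | ∃ c ∈ C, r = ‖c‖} ≤ ‖p‖ := by
  have hbdd : BddBelow {r : ℝ | ∃ c ∈ C, r = ‖c‖} := ⟨0, by rintro r ⟨c, -, rfl⟩; positivity⟩
  have : (‖·‖) '' closure C ⊆ Set.Ici (sInf {r : ℝ | ∃ c ∈ C, r = ‖c‖}) :=
    (image_closure_subset_closure_image continuous_norm).trans <| closure_minimal
      (by rintro _ ⟨c, hc, rfl⟩; exact csInf_le hbdd ⟨c, hc, rfl⟩) isClosed_Ici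
  exact this ⟨p, hp, rfl⟩

variable [InnerProductSpace ℝ E]

theorem inner_le_norm_of_norm_le_one {v : E} (hv : ‖v‖ ≤ 1) (c : E) : ⟪v, c⟫ ≤ ‖c‖ :=
  (real_inner_le_norm v c).trans (mul_le_of_le_one_left (norm_nonneg c) hv)

theorem sSup_inner_closedBall_eq_norm (c : E) :
    sSup {s : ℝ | ∃ v : E, ‖v‖ ≤ 1 ∧ s = ⟪v, c⟫} = ‖c‖ := by
  have hub : ∀ s ∈ {s : ℝ | ∃ v : E, ‖v‖ ≤ 1 ∧ s = ⟪v, c⟫}, s ≤ ‖c‖ := by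
    rintro s ⟨v, hv, rfl⟩
    exact inner_le_norm_of_norm_le_one hv c
  refine le_antisymm (csSup_le ⟨0, 0, by simp⟩ hub) (le_csSup ⟨‖c‖, hub⟩ ⟨‖c‖⁻¹ • c, ?_, ?_⟩)
  · rw [norm_smul, norm_inv, norm_norm]
    exact inv_mul_le_one
  · rw [real_inner_smul_left, real_inner_self_eq_norm_sq, sq, ← mul_assoc, inv_mul_mul_self]

theorem sSup_sInf_inner_eq_sInf_norm [CompleteSpace E] {C : Set E} (hC : Convex ℝ C) :
    sSup {r : ℝ | ∃ v : E, ‖v‖ ≤ 1 ∧ r = sInf {s : ℝ | ∃ c ∈ C, s = ⟪v, c⟫}} =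
      sInf {r : ℝ | ∃ c ∈ C, r = ‖c‖} := by
  rcases C.eq_empty_or_nonempty with rfl | hne
  · simp [show ∃ v : E, ‖v‖ ≤ 1 from ⟨0, by simp⟩]
  have hinf_le : ∀ v : E, ‖v‖ ≤ 1 → ∀ c ∈ C, sInf {s : ℝ | ∃ c ∈ C, s = ⟪v, c⟫} ≤ ‖c‖ := by
    intro v hv c hc
    by_cases hbdd : BddBelow {s : ℝ | ∃ c ∈ C, s = ⟪v, c⟫}
    · exact (csInf_le hbdd ⟨c, hc, rfl⟩).trans (inner_le_norm_of_norm_le_one hv c)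
    · rw [Real.sInf_of_not_bddBelow hbdd]
      exact norm_nonneg c
  obtain ⟨p, hp, hp_min⟩ := exists_norm_eq_iInf_of_complete_convex hne.closure
    isClosed_closure.isComplete hC.closure 0
  -- `p` is the point of `closure C` nearest to the origin, so `C` lies beyond the hyperplane
  -- through `p` orthogonal to `p`
  have hp_inner : ∀ c ∈ C, ‖p‖ ^ 2 ≤ ⟪p, c⟫ := by
    intro c hc
    have := (norm_eq_iInf_iff_real_inner_le_zero hC.closure hp).mp hp_min c (subset_closure hc)
    rw [zero_sub, inner_neg_left, inner_sub_right, real_inner_self_eq_norm_sq] at this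
    linarith
  set v := ‖p‖⁻¹ • p
  have hv : ‖v‖ ≤ 1 := by
    rw [norm_smul, norm_inv, norm_norm]
    exact inv_mul_le_one
  have hp_le : ‖p‖ ≤ sInf {s : ℝ | ∃ c ∈ C, s = ⟪v, c⟫} := by
    refine le_csInf ⟨_, hne.some, hne.some_mem, rfl⟩ ?_
    rintro _ ⟨c, hc, rfl⟩
    calc ‖p‖ = ‖p‖⁻¹ * ‖p‖ ^ 2 := by rw [sq, ← mul_assoc, inv_mul_mul_self]
      _ ≤ ‖p‖⁻¹ * ⟪p, c⟫ := by gcongr; exact hp_inner c hc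
      _ = ⟪v, c⟫ := (real_inner_smul_left p c _).symm
  have hL_bdd : BddAbove
      {r : ℝ | ∃ v : E, ‖v‖ ≤ 1 ∧ r = sInf {s : ℝ | ∃ c ∈ C, s = ⟪v, c⟫}} :=
    ⟨‖hne.some‖, by rintro _ ⟨v, hv, rfl⟩; exact hinf_le v hv _ hne.some_mem⟩
  refine le_antisymm (csSup_le ⟨_, v, hv, rfl⟩ ?_) ((sInf_norm_le_norm_of_mem_closure hp).trans
    (hp_le.trans (le_csSup hL_bdd ⟨v, hv, rfl⟩)))
  rintro _ ⟨v, hv, rfl⟩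
  exact le_csInf ⟨_, hne.some, hne.some_mem, rfl⟩ fun _ ⟨c, hc, hr⟩ => hr ▸ hinf_le v hv c hc

end InnerProductSpace

section WeightedCoords

variable {X : Type*} (s : Finset X) (m : X → ℝ)

noncomputable def sqrtWeighted (u : X → ℝ) : EuclideanSpace ℝ s :=
  WithLp.toLp 2 fun x => √(m x) * u x

noncomputable def invSqrtWeighted (g : X → ℝ) : EuclideanSpace ℝ s :=
  WithLp.toLp 2 fun x => (√(m x))⁻¹ * g x

theorem isLinearMap_invSqrtWeighted : IsLinearMap ℝ (invSqrtWeighted s m) :=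
  ⟨fun g h => by ext x; simp [invSqrtWeighted, mul_add],
    fun c g => by ext x; simp [invSqrtWeighted, mul_left_comm]⟩

variable {s m}

theorem norm_sqrtWeighted_le_one_iff (hm : ∀ x ∈ s, 0 ≤ m x) (u : X → ℝ) :
    ‖sqrtWeighted s m u‖ ≤ 1 ↔ ∑ x ∈ s, m x * u x ^ 2 ≤ 1 := by
  rw [← sq_le_one_iff₀ (norm_nonneg _), EuclideanSpace.norm_sq_eq, ← Finset.sum_coe_sort s]
  refine Iff.of_eq (congrArg (· ≤ 1) (Finset.sum_congr rfl fun x _ => ?_))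
  simp [sqrtWeighted, mul_pow, Real.sq_sqrt (hm x x.2)]

theorem inner_sqrtWeighted_invSqrtWeighted (hm : ∀ x ∈ s, 0 < m x) (u g : X → ℝ) :
    ⟪sqrtWeighted s m u, invSqrtWeighted s m g⟫ = ∑ x ∈ s, u x * g x := by
  rw [EuclideanSpace.inner_eq_star_dotProduct, ← Finset.sum_coe_sort s]
  refine Finset.sum_congr rfl fun x _ => ?_
  have : √(m x) ≠ 0 := (Real.sqrt_pos.mpr (hm x x.2)).ne'
  simp [sqrtWeighted, invSqrtWeighted]
  field_simp

theorem sqrtWeighted_surjective (hm : ∀ x ∈ s, 0 < m x) :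
    Function.Surjective (sqrtWeighted s m) := by
  classical
  intro v
  refine ⟨fun x => if hx : x ∈ s then (√(m x))⁻¹ * v ⟨x, hx⟩ else 0, ?_⟩
  ext x
  have : √(m x) ≠ 0 := (Real.sqrt_pos.mpr (hm x x.2)).ne'
  simp [sqrtWeighted, this]

end WeightedCoords

section WeightedDuality

variable {X : Type*} {s : Finset X} {m : X → ℝ}

theorem sSup_sum_mul_eq_norm (hm : ∀ x ∈ s, 0 < m x) (g : X → ℝ) :
    sSup {r : ℝ | ∃ u : X → ℝ, ∑ x ∈ s, m x * u x ^ 2 ≤ 1 ∧ r = ∑ x ∈ s, u x * g x} =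
      ‖invSqrtWeighted s m g‖ := by
  rw [← sSup_inner_closedBall_eq_norm]
  simp only [(sqrtWeighted_surjective hm).exists,
    norm_sqrtWeighted_le_one_iff fun x hx => (hm x hx).le, inner_sqrtWeighted_invSqrtWeighted hm]

theorem sSup_sInf_sum_mul_eq_sInf_norm (hm : ∀ x ∈ s, 0 < m x) {G : Set (X → ℝ)}
    (hG : Convex ℝ G) :
    sSup {r : ℝ | ∃ u : X → ℝ, ∑ x ∈ s, m x * u x ^ 2 ≤ 1 ∧
        r = sInf {t : ℝ | ∃ g ∈ G, t = ∑ x ∈ s, u x * g x}} =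
      sInf {r : ℝ | ∃ g ∈ G, r = ‖invSqrtWeighted s m g‖} := by
  have := sSup_sInf_inner_eq_sInf_norm (hG.is_linear_image (isLinearMap_invSqrtWeighted s m))
  simp only [Set.exists_mem_image] at this
  simpa only [(sqrtWeighted_surjective hm).exists,
    norm_sqrtWeighted_le_one_iff fun x hx => (hm x hx).le,
    inner_sqrtWeighted_invSqrtWeighted hm] using this

end WeightedDuality

section ProbWeight

variable {X : Type*} {A : Set (X →₀ ℕ)}

theorem isProbWeight_single {ν : X →₀ ℕ} (hν : ν ∈ A) : IsProbWeight A (Finsupp.single ν 1) := by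
  classical
  refine ⟨fun ν' => ?_, fun ν' => ?_, ?_, ?_⟩ <;>
    simp [Finsupp.single_apply, hν] <;> split_ifs <;> norm_num

theorem convex_setOf_isProbWeight (A : Set (X →₀ ℕ)) : Convex ℝ {w | IsProbWeight A w} := by
  classical
  rintro w₁ ⟨h₁0, h₁1, h₁A, h₁s⟩ w₂ ⟨h₂0, h₂1, h₂A, h₂s⟩ a b ha hb hab
  have hsupp : (a • w₁ + b • w₂).support ⊆ w₁.support ∪ w₂.support :=
    Finsupp.support_add.trans (Finset.union_subset_union Finsupp.support_smul Finsupp.support_smul)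
  refine ⟨fun ν => ?_, fun ν => ?_, ?_, ?_⟩
  · simp only [Finsupp.coe_add, Finsupp.coe_smul, Pi.add_apply, Pi.smul_apply, smul_eq_mul]
    have := h₁0 ν; have := h₂0 ν; positivity
  · simp only [Finsupp.coe_add, Finsupp.coe_smul, Pi.add_apply, Pi.smul_apply, smul_eq_mul]
    nlinarith [h₁1 ν, h₂1 ν, h₁0 ν, h₂0 ν]
  · exact (Finset.coe_subset.mpr hsupp).trans (by simpa using Set.union_subset h₁A h₂A)
  · show (a • w₁ + b • w₂).sum (fun _ c => c) = 1
    rw [Finsupp.sum_add_index' (fun _ => rfl) (fun _ _ _ => rfl),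
      Finsupp.sum_smul_index' (fun _ => rfl), Finsupp.sum_smul_index' (fun _ => rfl)]
    simp only [Finsupp.sum, smul_eq_mul, ← Finset.mul_sum, h₁s, h₂s, mul_one, hab]

theorem sInf_isProbWeight_sum_mul (A : Set (X →₀ ℕ)) (f : (X →₀ ℕ) → ℝ) :
    sInf {s : ℝ | ∃ w : (X →₀ ℕ) →₀ ℝ, IsProbWeight A w ∧ s = ∑ ν ∈ w.support, w ν * f ν} =
      sInf {s : ℝ | ∃ ν ∈ A, s = f ν} := by
  refine csInf_eq_csInf_of_forall_exists_le ?_ ?_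
  · rintro _ ⟨w, ⟨hw0, -, hwA, hw1⟩, rfl⟩
    have hne : w.support.Nonempty := Finset.nonempty_of_sum_ne_zero (hw1 ▸ one_ne_zero)
    obtain ⟨ν, hν, hmin⟩ := w.support.exists_min_image f hne
    refine ⟨f ν, ⟨ν, hwA hν, rfl⟩, ?_⟩
    calc f ν = ∑ ν' ∈ w.support, w ν' * f ν := by rw [← Finset.sum_mul, hw1, one_mul]
      _ ≤ ∑ ν' ∈ w.support, w ν' * f ν' :=
        Finset.sum_le_sum fun ν' hν' => mul_le_mul_of_nonneg_left (hmin ν' hν') (hw0 ν')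
  · rintro _ ⟨ν, hν, rfl⟩
    exact ⟨_, ⟨_, isProbWeight_single hν, rfl⟩, by simp⟩

end ProbWeight

section ConvexDist

variable {X : Type*}

noncomputable def meanExcess (ξ : X →₀ ℕ) : ((X →₀ ℕ) →₀ ℝ) →ₗ[ℝ] X → ℝ :=
  Finsupp.linearCombination ℝ fun ν x => max ((ξ x : ℝ) - ν x) 0

theorem meanExcess_apply (ξ : X →₀ ℕ) (w : (X →₀ ℕ) →₀ ℝ) :
    meanExcess ξ w = fun x => ∑ ν ∈ w.support, w ν * max ((ξ x : ℝ) - ν x) 0 := by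
  ext x
  simp [meanExcess, Finsupp.linearCombination_apply, Finsupp.sum]

theorem convexDist_eq_sSup_sInf_isProbWeight (ξ : X →₀ ℕ) (A : Set (X →₀ ℕ)) :
    convexDist ξ A =
      sSup {r : ℝ | ∃ u : X → ℝ, ∑ x ∈ ξ.support, (ξ x : ℝ) * u x ^ 2 ≤ 1 ∧
        r = sInf {s : ℝ | ∃ w : (X →₀ ℕ) →₀ ℝ, IsProbWeight A w ∧
          s = ∑ x ∈ ξ.support, u x * ∑ ν ∈ w.support, w ν * max ((ξ x : ℝ) - ν x) 0}} := by
  have hswap : ∀ (u : X → ℝ) (w : (X →₀ ℕ) →₀ ℝ),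
      ∑ x ∈ ξ.support, u x * ∑ ν ∈ w.support, w ν * max ((ξ x : ℝ) - ν x) 0 =
        ∑ ν ∈ w.support, w ν * ∑ x ∈ ξ.support, u x * max ((ξ x : ℝ) - ν x) 0 := by
    intro u w
    simp only [Finset.mul_sum]
    rw [Finset.sum_comm]
    simp only [mul_left_comm]
  simp only [convexDist, hswap, sInf_isProbWeight_sum_mul]

theorem sSup_sInf_isProbWeight_eq_sInf_sSup (ξ : X →₀ ℕ) (A : Set (X →₀ ℕ)) :
    sSup {r : ℝ | ∃ u : X → ℝ, ∑ x ∈ ξ.support, (ξ x : ℝ) * u x ^ 2 ≤ 1 ∧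
        r = sInf {s : ℝ | ∃ w : (X →₀ ℕ) →₀ ℝ, IsProbWeight A w ∧
          s = ∑ x ∈ ξ.support, u x * ∑ ν ∈ w.support, w ν * max ((ξ x : ℝ) - ν x) 0}} =
      sInf {r : ℝ | ∃ w : (X →₀ ℕ) →₀ ℝ, IsProbWeight A w ∧
        r = sSup {s : ℝ | ∃ u : X → ℝ, ∑ x ∈ ξ.support, (ξ x : ℝ) * u x ^ 2 ≤ 1 ∧
          s = ∑ x ∈ ξ.support, u x * ∑ ν ∈ w.support, w ν * max ((ξ x : ℝ) - ν x) 0}} := by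
  have hξ : ∀ x ∈ ξ.support, (0 : ℝ) < ξ x := fun x hx =>
    Nat.cast_pos.mpr (Nat.pos_of_ne_zero (Finsupp.mem_support_iff.mp hx))
  have := sSup_sInf_sum_mul_eq_sInf_norm hξ
    ((convex_setOf_isProbWeight A).linear_image (meanExcess ξ))
  simp only [Set.exists_mem_image, Set.mem_ofPred_eq, meanExcess_apply] at this
  simp only [this, sSup_sum_mul_eq_norm hξ]

end ConvexDist

theorem convexDist_minimax_general {X : Type*} (ξ : X →₀ ℕ) (A : Set (X →₀ ℕ)) :
    convexDist ξ A =
      sSup {r : ℝ | ∃ u : X → ℝ,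
        (∑ x ∈ ξ.support, (ξ x : ℝ) * u x ^ 2) ≤ 1 ∧
        r = sInf {s : ℝ | ∃ w : (X →₀ ℕ) →₀ ℝ, IsProbWeight A w ∧
          s = ∑ x ∈ ξ.support,
            u x * ∑ ν ∈ w.support, w ν * max ((ξ x : ℝ) - (ν x : ℝ)) 0}} ∧
    convexDist ξ A =
      sInf {r : ℝ | ∃ w : (X →₀ ℕ) →₀ ℝ, IsProbWeight A w ∧
        r = sSup {s : ℝ | ∃ u : X → ℝ,
          (∑ x ∈ ξ.support, (ξ x : ℝ) * u x ^ 2) ≤ 1 ∧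
          s = ∑ x ∈ ξ.support,
            u x * ∑ ν ∈ w.support, w ν * max ((ξ x : ℝ) - (ν x : ℝ)) 0}} :=
  have h := convexDist_eq_sSup_sInf_isProbWeight ξ A
  ⟨h, h.trans (sSup_sInf_isProbWeight_eq_sInf_sSup ξ A)⟩

/-- Proposition 8.1: minimax characterization of the convex distance, where `w`
ranges over finitely supported probability weights on `A`. -/
theorem convexDist_minimax {X : Type*} (ξ : X →₀ ℕ) (A : Set (X →₀ ℕ))
    (hA : A.Nonempty) :
    convexDist ξ A =
      sSup {r : ℝ | ∃ u : X → ℝ,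
        (∑ x ∈ ξ.support, (ξ x : ℝ) * u x ^ 2) ≤ 1 ∧
        r = sInf {s : ℝ | ∃ w : (X →₀ ℕ) →₀ ℝ, IsProbWeight A w ∧
          s = ∑ x ∈ ξ.support,
            u x * ∑ ν ∈ w.support, w ν * max ((ξ x : ℝ) - (ν x : ℝ)) 0}} ∧
    convexDist ξ A =
      sInf {r : ℝ | ∃ w : (X →₀ ℕ) →₀ ℝ, IsProbWeight A w ∧
        r = sSup {s : ℝ | ∃ u : X → ℝ,
          (∑ x ∈ ξ.support, (ξ x : ℝ) * u x ^ 2) ≤ 1 ∧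
          s = ∑ x ∈ ξ.support,
            u x * ∑ ν ∈ w.support, w ν * max ((ξ x : ℝ) - (ν x : ℝ)) 0}} :=
  convexDist_minimax_general ξ A
end

section
/- Let X be a set, ξ : X → ℕ finitely supported, and A a nonempty set of finitely supported functions X → ℕ. Then Σ_{z ∈ supp ξ} ξ(z)·(d_T(ξ, A) − d_T(ξ − δ_z, A))² ≤ 1. -/
/-!
Fix a nonnegative weight `u` that is `ε`-optimal in the supremum defining `d_T(ξ, A)`.
Removing one point at `z` lowers each `(ξ(z) − ν(z))₊` by at most one, and `u` stays admissible
for `ξ − δ_z`, so `d_T(ξ, A) − d_T(ξ − δ_z, A) ≤ u(z) + ε`. The difference is also nonnegative,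
since `d_T(·, A)` is monotone: a weight `v` for `η ≤ ξ` rescaled to `(η/ξ)·v` is admissible for `ξ`
and does at least as well. Hence the sum is at most `Σ_z ξ(z)·(u(z) + ε)² → Σ_z ξ(z)·u(z)² ≤ 1`.
-/

open Filter Topology

namespace ConvexDist

variable {X : Type*} {ξ η ν : X →₀ ℕ} {A : Set (X →₀ ℕ)} {u v : X → ℝ}

def weightedExcess (ξ ν : X →₀ ℕ) (u : X → ℝ) : ℝ :=
  ∑ x ∈ ξ.support, u x * max ((ξ x : ℝ) - (ν x : ℝ)) 0

noncomputable def minExcess (ξ : X →₀ ℕ) (A : Set (X →₀ ℕ)) (u : X → ℝ) : ℝ :=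
  sInf {s : ℝ | ∃ ν ∈ A, s = weightedExcess ξ ν u}

def weightedSqNorm (ξ : X →₀ ℕ) (u : X → ℝ) : ℝ :=
  ∑ x ∈ ξ.support, (ξ x : ℝ) * u x ^ 2

theorem weightedExcess_eq_sum_of_support_subset {s : Finset X} (h : ξ.support ⊆ s)
    (ν : X →₀ ℕ) (u : X → ℝ) :
    weightedExcess ξ ν u = ∑ x ∈ s, u x * max ((ξ x : ℝ) - (ν x : ℝ)) 0 :=
  Finset.sum_subset h fun x _ hx => by simp [Finsupp.notMem_support_iff.1 hx]

theorem weightedSqNorm_eq_sum_of_support_subset {s : Finset X} (h : ξ.support ⊆ s)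
    (u : X → ℝ) : weightedSqNorm ξ u = ∑ x ∈ s, (ξ x : ℝ) * u x ^ 2 :=
  Finset.sum_subset h fun x _ hx => by simp [Finsupp.notMem_support_iff.1 hx]

theorem abs_weightedExcess_le (ξ ν : X →₀ ℕ) (u : X → ℝ) :
    |weightedExcess ξ ν u| ≤ ∑ x ∈ ξ.support, (ξ x : ℝ) * |u x| := by
  refine (Finset.abs_sum_le_sum_abs _ _).trans (Finset.sum_le_sum fun x _ => ?_)
  have hν : (0 : ℝ) ≤ ν x := Nat.cast_nonneg _
  rw [abs_mul, abs_of_nonneg (le_max_right _ (0 : ℝ)), mul_comm]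
  exact mul_le_mul_of_nonneg_right (max_le (by linarith) (Nat.cast_nonneg _)) (abs_nonneg _)

theorem sum_mul_abs_le (hu : weightedSqNorm ξ u ≤ 1) :
    ∑ x ∈ ξ.support, (ξ x : ℝ) * |u x| ≤ 1 + ∑ x ∈ ξ.support, (ξ x : ℝ) := by
  have habs : ∀ t : ℝ, |t| ≤ t ^ 2 + 1 := fun t => by nlinarith [abs_nonneg t, sq_abs t]
  calc ∑ x ∈ ξ.support, (ξ x : ℝ) * |u x|
      ≤ ∑ x ∈ ξ.support, ((ξ x : ℝ) * u x ^ 2 + ξ x) :=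
        Finset.sum_le_sum fun x _ => by
          nlinarith [habs (u x), (Nat.cast_nonneg (ξ x) : (0 : ℝ) ≤ ξ x)]
    _ ≤ 1 + ∑ x ∈ ξ.support, (ξ x : ℝ) := by
        rw [Finset.sum_add_distrib]; exact add_le_add_left hu _

theorem minExcess_le (hν : ν ∈ A) (u : X → ℝ) : minExcess ξ A u ≤ weightedExcess ξ ν u := by
  refine csInf_le ⟨-∑ x ∈ ξ.support, (ξ x : ℝ) * |u x|, ?_⟩ ⟨ν, hν, rfl⟩
  rintro _ ⟨ν', -, rfl⟩
  exact neg_le_of_abs_le (abs_weightedExcess_le ξ ν' u)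

theorem minExcess_le_add_of_forall (hA : A.Nonempty) {c : ℝ}
    (h : ∀ ν ∈ A, weightedExcess ξ ν u ≤ weightedExcess η ν v + c) :
    minExcess ξ A u ≤ minExcess η A v + c := by
  obtain ⟨ν₀, hν₀⟩ := hA
  have : minExcess ξ A u - c ≤ minExcess η A v := by
    refine le_csInf ⟨_, ν₀, hν₀, rfl⟩ ?_
    rintro _ ⟨ν, hν, rfl⟩
    linarith [minExcess_le hν (ξ := ξ) u, h ν hν]
  linarith

theorem minExcess_le_minExcess (hA : A.Nonempty)
    (h : ∀ ν ∈ A, weightedExcess ξ ν u ≤ weightedExcess η ν v) :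
    minExcess ξ A u ≤ minExcess η A v := by
  simpa using minExcess_le_add_of_forall (c := 0) hA fun ν hν => by simpa using h ν hν

theorem minExcess_le_convexDist (hA : A.Nonempty) (hu : weightedSqNorm ξ u ≤ 1) :
    minExcess ξ A u ≤ convexDist ξ A := by
  obtain ⟨ν, hν⟩ := hA
  refine le_csSup ⟨1 + ∑ x ∈ ξ.support, (ξ x : ℝ), ?_⟩ ⟨u, hu, rfl⟩
  rintro _ ⟨w, hw, rfl⟩
  calc minExcess ξ A w ≤ weightedExcess ξ ν w := minExcess_le hν w
    _ ≤ ∑ x ∈ ξ.support, (ξ x : ℝ) * |w x| := le_of_abs_le (abs_weightedExcess_le ξ ν w)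
    _ ≤ _ := sum_mul_abs_le hw

theorem weightedSqNorm_posPart_le (ξ : X →₀ ℕ) (u : X → ℝ) :
    weightedSqNorm ξ u⁺ ≤ weightedSqNorm ξ u := by
  refine Finset.sum_le_sum fun x _ => mul_le_mul_of_nonneg_left ?_ (Nat.cast_nonneg _)
  rcases le_total (u x) 0 with h | h
  · simp [posPart_eq_zero.2 h, sq_nonneg]
  · rw [Pi.posPart_apply, posPart_eq_self.2 h]

theorem minExcess_le_minExcess_posPart (hA : A.Nonempty) (ξ : X →₀ ℕ) (u : X → ℝ) :
    minExcess ξ A u ≤ minExcess ξ A u⁺ :=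
  minExcess_le_minExcess hA fun _ _ => Finset.sum_le_sum fun x _ =>
    mul_le_mul_of_nonneg_right (le_posPart (u x)) (le_max_right _ _)

theorem convexDist_le_of_forall_nonneg (hA : A.Nonempty) {c : ℝ}
    (h : ∀ u, 0 ≤ u → weightedSqNorm ξ u ≤ 1 → minExcess ξ A u ≤ c) :
    convexDist ξ A ≤ c := by
  refine csSup_le ⟨_, 0, by simp, rfl⟩ ?_
  rintro _ ⟨u, hu, rfl⟩
  exact (minExcess_le_minExcess_posPart hA ξ u).trans
    (h u⁺ (posPart_nonneg u) ((weightedSqNorm_posPart_le ξ u).trans hu))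

theorem exists_nonneg_lt_minExcess (hA : A.Nonempty) (ξ : X →₀ ℕ) {ε : ℝ} (hε : 0 < ε) :
    ∃ u, 0 ≤ u ∧ weightedSqNorm ξ u ≤ 1 ∧ convexDist ξ A - ε < minExcess ξ A u := by
  by_contra! h
  have := convexDist_le_of_forall_nonneg hA (c := convexDist ξ A - ε) h
  linarith

theorem max_sub_le_div_mul_max_sub {a b k : ℝ} (ha : 0 ≤ a) (hab : a ≤ b) (hb : 0 < b)
    (hk : 0 ≤ k) : max (a - k) 0 ≤ a / b * max (b - k) 0 := by
  have hq : a / b ≤ 1 := div_le_one_of_le₀ hab hb.le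
  have hq0 : 0 ≤ a / b := div_nonneg ha hb.le
  refine max_le ?_ (mul_nonneg hq0 (le_max_right _ _))
  calc a - k ≤ a - a / b * k := by nlinarith [mul_le_mul_of_nonneg_right hq hk]
    _ = a / b * (b - k) := by field_simp
    _ ≤ a / b * max (b - k) 0 := mul_le_mul_of_nonneg_left (le_max_left _ _) hq0

theorem weightedSqNorm_mono (h : η ≤ ξ) (u : X → ℝ) :
    weightedSqNorm η u ≤ weightedSqNorm ξ u := by
  rw [weightedSqNorm_eq_sum_of_support_subset (Finsupp.support_mono h)]
  exact Finset.sum_le_sum fun x _ =>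
    mul_le_mul_of_nonneg_right (Nat.cast_le.2 (h x)) (sq_nonneg _)

theorem weightedSqNorm_rescale_le (h : η ≤ ξ) (v : X → ℝ) :
    weightedSqNorm ξ (fun x => η x / ξ x * v x) ≤ weightedSqNorm η v := by
  rw [weightedSqNorm_eq_sum_of_support_subset (Finsupp.support_mono h) v]
  refine Finset.sum_le_sum fun x hx => ?_
  have hξ : (0 : ℝ) < ξ x := Nat.cast_pos.2 (Nat.pos_of_ne_zero (Finsupp.mem_support_iff.1 hx))
  have hq : (η x : ℝ) / ξ x ≤ 1 := div_le_one_of_le₀ (Nat.cast_le.2 (h x)) hξ.le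
  calc (ξ x : ℝ) * ((η x : ℝ) / ξ x * v x) ^ 2 = (η x : ℝ) / ξ x * ((η x : ℝ) * v x ^ 2) := by
        field_simp
    _ ≤ (η x : ℝ) * v x ^ 2 :=
        mul_le_of_le_one_left (by positivity) hq

theorem weightedExcess_le_rescale (h : η ≤ ξ) (hv : 0 ≤ v) (ν : X →₀ ℕ) :
    weightedExcess η ν v ≤ weightedExcess ξ ν (fun x => η x / ξ x * v x) := by
  rw [weightedExcess_eq_sum_of_support_subset (Finsupp.support_mono h)]
  refine Finset.sum_le_sum fun x hx => ?_
  have hξ : (0 : ℝ) < ξ x := Nat.cast_pos.2 (Nat.pos_of_ne_zero (Finsupp.mem_support_iff.1 hx))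
  dsimp only
  rw [mul_comm (_ / _) (v x), mul_assoc]
  exact mul_le_mul_of_nonneg_left (max_sub_le_div_mul_max_sub (Nat.cast_nonneg _)
    (Nat.cast_le.2 (h x)) hξ (Nat.cast_nonneg _)) (hv x)

theorem convexDist_mono (hA : A.Nonempty) (h : η ≤ ξ) : convexDist η A ≤ convexDist ξ A := by
  refine convexDist_le_of_forall_nonneg hA fun v hv0 hv => ?_
  calc minExcess η A v ≤ minExcess ξ A (fun x => η x / ξ x * v x) :=
        minExcess_le_minExcess hA fun ν _ => weightedExcess_le_rescale h hv0 ν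
    _ ≤ convexDist ξ A :=
        minExcess_le_convexDist hA ((weightedSqNorm_rescale_le h v).trans hv)

theorem weightedExcess_le_add (h : η ≤ ξ) (hu : 0 ≤ u) (ν : X →₀ ℕ) :
    weightedExcess ξ ν u ≤
      weightedExcess η ν u + ∑ x ∈ ξ.support, u x * ((ξ x : ℝ) - η x) := by
  rw [weightedExcess_eq_sum_of_support_subset (Finsupp.support_mono h) ν u,
    ← Finset.sum_add_distrib, weightedExcess]
  refine Finset.sum_le_sum fun x _ => ?_
  rw [← mul_add]
  refine mul_le_mul_of_nonneg_left (max_le ?_ ?_) (hu x)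
  · linarith [le_max_left ((η x : ℝ) - ν x) 0]
  · linarith [le_max_right ((η x : ℝ) - ν x) 0, (Nat.cast_le.2 (h x) : (η x : ℝ) ≤ ξ x)]

theorem sum_mul_sub_sub_single {z : X} (hz : z ∈ ξ.support) (u : X → ℝ) :
    ∑ x ∈ ξ.support, u x * ((ξ x : ℝ) - ((ξ - Finsupp.single z 1 : X →₀ ℕ) x : ℝ)) = u z := by
  have hz1 : 1 ≤ ξ z := Nat.one_le_iff_ne_zero.2 (Finsupp.mem_support_iff.1 hz)
  rw [Finset.sum_eq_single_of_mem z hz fun x _ hx => by simp [Ne.symm hx]]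
  simp [Nat.cast_sub hz1]

theorem minExcess_le_convexDist_sub_single_add (hA : A.Nonempty) {z : X} (hz : z ∈ ξ.support)
    (hu0 : 0 ≤ u) (hu : weightedSqNorm ξ u ≤ 1) :
    minExcess ξ A u ≤ convexDist (ξ - Finsupp.single z 1) A + u z := by
  have hle : ξ - Finsupp.single z 1 ≤ ξ := tsub_le_self
  calc minExcess ξ A u ≤ minExcess (ξ - Finsupp.single z 1) A u + u z :=
        minExcess_le_add_of_forall hA fun ν _ => by
          simpa only [sum_mul_sub_sub_single hz] using weightedExcess_le_add hle hu0 ν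
    _ ≤ _ := by
        gcongr
        exact minExcess_le_convexDist hA ((weightedSqNorm_mono hle u).trans hu)

theorem sum_mul_add_sq_le (hu0 : 0 ≤ u) (hu : weightedSqNorm ξ u ≤ 1) {ε : ℝ} (hε : 0 ≤ ε) :
    ∑ x ∈ ξ.support, (ξ x : ℝ) * (u x + ε) ^ 2 ≤
      1 + 2 * ε * (1 + ∑ x ∈ ξ.support, (ξ x : ℝ)) + ε ^ 2 * ∑ x ∈ ξ.support, (ξ x : ℝ) := by
  have hlin : ∑ x ∈ ξ.support, (ξ x : ℝ) * u x ≤ 1 + ∑ x ∈ ξ.support, (ξ x : ℝ) := by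
    simpa only [abs_of_nonneg (hu0 _)] using sum_mul_abs_le hu
  have hexp : ∑ x ∈ ξ.support, (ξ x : ℝ) * (u x + ε) ^ 2 = weightedSqNorm ξ u
      + 2 * ε * ∑ x ∈ ξ.support, (ξ x : ℝ) * u x + ε ^ 2 * ∑ x ∈ ξ.support, (ξ x : ℝ) := by
    simp only [weightedSqNorm, Finset.mul_sum, ← Finset.sum_add_distrib]
    exact Finset.sum_congr rfl fun x _ => by ring
  rw [hexp]
  nlinarith

end ConvexDist

open ConvexDist in
/-- Proposition 8.3 (deterministic part): the remove-one-point differences of the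
convex distance satisfy `Σ_{z ∈ supp ξ} ξ(z)·(d_T(ξ,A) − d_T(ξ − δ_z, A))² ≤ 1`. -/
theorem convexDist_remove_one_sq_sum_le_one {X : Type*} (ξ : X →₀ ℕ)
    (A : Set (X →₀ ℕ)) (hA : A.Nonempty) :
    ∑ z ∈ ξ.support,
      (ξ z : ℝ) * (convexDist ξ A - convexDist (ξ - Finsupp.single z 1) A) ^ 2 ≤ 1 := by
  set S := ∑ x ∈ ξ.support, (ξ x : ℝ)
  have hlim : Tendsto (fun ε : ℝ => 1 + 2 * ε * (1 + S) + ε ^ 2 * S) (𝓝[>] 0) (𝓝 1) := by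
    have hcont : Continuous fun ε : ℝ => 1 + 2 * ε * (1 + S) + ε ^ 2 * S := by fun_prop
    simpa using (hcont.tendsto 0).mono_left nhdsWithin_le_nhds
  refine ge_of_tendsto hlim (eventually_nhdsWithin_of_forall fun ε (hε : 0 < ε) => ?_)
  obtain ⟨u, hu0, hu, hgap⟩ := exists_nonneg_lt_minExcess hA ξ hε
  refine (Finset.sum_le_sum fun z hz => ?_).trans (sum_mul_add_sq_le hu0 hu hε.le)
  have hmono := convexDist_mono hA (tsub_le_self : ξ - Finsupp.single z 1 ≤ ξ)
  have hremove := minExcess_le_convexDist_sub_single_add hA hz hu0 hu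
  have hdiff_nonneg : 0 ≤ convexDist ξ A - convexDist (ξ - Finsupp.single z 1) A :=
    sub_nonneg.2 hmono
  have hdiff_le : convexDist ξ A - convexDist (ξ - Finsupp.single z 1) A ≤ u z + ε := by
    linarith
  gcongr
end
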